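/- arXiv:0707.0094 — 4 statements merged into one kernel-verified Lean document; each statement's English description precedes it below -/
import Mathlib

section
/- Let ν > 1 and let ξ : ℝ → (0,1) be the solution of dξ/dy = ξ^(ν+1)(1−ξ) with ξ(0) = (ν+1)/(ν+2). Then there exists a constant C* > 0 such that (1 − ξ(y))·e^y → C* as y → +∞. -/
open Filter

/-- For the profile ξ' = ξ^(ν+1)(1−ξ), ξ(0) = (ν+1)/(ν+2), there is C* > 0 with
(1 − ξ(y)) e^y → C* as y → +∞. -/
theorem stmt3 (ν : ℝ) (hν : 1 < ν) (ξ : ℝ → ℝ)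
    (hmem : ∀ y, ξ y ∈ Set.Ioo (0:ℝ) 1)
    (hode : ∀ y, HasDerivAt ξ ((ξ y) ^ (ν + 1) * (1 - ξ y)) y)
    (h0 : ξ 0 = (ν + 1) / (ν + 2)) :
    ∃ C : ℝ, 0 < C ∧ Tendsto (fun y => (1 - ξ y) * Real.exp y) atTop (nhds C) := by
  obtain ⟨ha0, ha1⟩ := hmem 0
  set a := ξ 0 with haa
  set b := a ^ (ν + 1) with hbb
  have hb0 : 0 < b := Real.rpow_pos_of_pos ha0 _
  have hν1 : (1:ℝ) ≤ ν + 1 := by linarith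
  -- ξ is monotone
  have hξmono : Monotone ξ := by
    apply monotone_of_deriv_nonneg (fun y => (hode y).differentiableAt)
    intro y
    rw [(hode y).deriv]
    have h := hmem y
    have h1 : 0 ≤ ξ y ^ (ν + 1) := Real.rpow_nonneg h.1.le _
    nlinarith [h.2]
  -- auxiliary: rpow lower bound (Bernoulli)
  have hbern : ∀ y, 1 - ξ y ^ (ν + 1) ≤ (ν + 1) * (1 - ξ y) := by
    intro y
    have h := hmem y
    have := one_add_mul_self_le_rpow_one_add (s := ξ y - 1) (by linarith [h.1]) hν1
    have h2 : (1 : ℝ) + (ξ y - 1) = ξ y := by ring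
    rw [h2] at this
    nlinarith
  -- g is the target function
  set g := fun y => (1 - ξ y) * Real.exp y with hg
  have hgd : ∀ y, HasDerivAt g (Real.exp y * ((1 - ξ y) * (1 - ξ y ^ (ν + 1)))) y := by
    intro y
    have h1 : HasDerivAt (fun y => 1 - ξ y) (-(ξ y ^ (ν + 1) * (1 - ξ y))) y :=
      (hode y).const_sub 1
    have := h1.fun_mul (Real.hasDerivAt_exp y)
    exact this.congr_deriv (by ring)
  have hgmono : Monotone g := by
    apply monotone_of_deriv_nonneg (fun y => (hgd y).differentiableAt)
    intro y
    rw [(hgd y).deriv]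
    have h := hmem y
    have h1 : ξ y ^ (ν + 1) ≤ 1 := Real.rpow_le_one h.1.le h.2.le (by linarith)
    exact mul_nonneg (Real.exp_pos y).le
      (mul_nonneg (by linarith [h.2]) (by linarith))
  -- Step 1 : exponential decay of 1 - ξ on [0,∞)
  set h : ℝ → ℝ := fun y => (1 - ξ y) * Real.exp (b * y) with hh
  have hhd : ∀ y, HasDerivAt h (Real.exp (b * y) * ((1 - ξ y) * (b - ξ y ^ (ν + 1)))) y := by
    intro y
    have h1 : HasDerivAt (fun y => 1 - ξ y) (-(ξ y ^ (ν + 1) * (1 - ξ y))) y :=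
      (hode y).const_sub 1
    have h2 : HasDerivAt (fun y : ℝ => Real.exp (b * y)) (Real.exp (b * y) * b) y := by
      simpa using ((hasDerivAt_id y).const_mul b).exp
    have := h1.fun_mul h2
    exact this.congr_deriv (by ring)
  have hhanti : AntitoneOn h (Set.Ici 0) := by
    apply antitoneOn_of_deriv_nonpos (convex_Ici 0)
    · exact fun y _ => (hhd y).continuousAt.continuousWithinAt
    · exact fun y _ => ((hhd y).differentiableAt).differentiableWithinAt
    · intro y hy
      rw [(hhd y).deriv]
      have hy0 : (0:ℝ) ≤ y := le_of_lt (by simpa using hy)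
      have hay : a ≤ ξ y := hξmono hy0
      have h := hmem y
      have hb : b ≤ ξ y ^ (ν + 1) := Real.rpow_le_rpow ha0.le hay (by linarith)
      exact mul_nonpos_of_nonneg_of_nonpos (Real.exp_pos (b * y)).le
        (mul_nonpos_of_nonneg_of_nonpos (by linarith [h.2]) (by linarith))
  have hdecay : ∀ y, 0 ≤ y → 1 - ξ y ≤ (1 - a) * Real.exp (-(b * y)) := by
    intro y hy
    have := hhanti (Set.self_mem_Ici) hy hy
    have h0' : h 0 = 1 - a := by simp [hh, haa]
    rw [h0'] at this
    have hE : (0:ℝ) < Real.exp (b * y) := Real.exp_pos _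
    rw [Real.exp_neg, ← div_eq_mul_inv, le_div_iff₀ hE]
    exact this
  -- Step 2 : g is bounded above
  set K := (ν + 1) * (1 - a) with hK
  have hK0 : 0 ≤ K := by nlinarith
  set E : ℝ → ℝ := fun y => Real.exp (K / b * Real.exp (-(b * y))) with hE
  have hb' : b ≠ 0 := ne_of_gt hb0
  have hEd : ∀ y, HasDerivAt E (E y * (-(K * Real.exp (-(b * y))))) y := by
    intro y
    have h1 : HasDerivAt (fun y : ℝ => -(b * y)) (-b) y := by
      simpa using ((hasDerivAt_id y).const_mul b).fun_neg
    have h2 : HasDerivAt (fun y : ℝ => Real.exp (-(b * y))) (Real.exp (-(b * y)) * (-b)) y :=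
      h1.exp
    have h3 : HasDerivAt (fun y : ℝ => K / b * Real.exp (-(b * y)))
        (K / b * (Real.exp (-(b * y)) * (-b))) y := h2.const_mul _
    have h4 := h3.exp
    have hs : K / b * (Real.exp (-(b * y)) * (-b)) = -(K * Real.exp (-(b * y))) := by
      field_simp
    rw [hs] at h4
    exact h4
  set φ : ℝ → ℝ := fun y => g y * E y with hφ
  have hφanti : AntitoneOn φ (Set.Ici 0) := by
    have hφd : ∀ y, HasDerivAt φ
        (Real.exp y * ((1 - ξ y) * (1 - ξ y ^ (ν + 1))) * E y
          + g y * (E y * (-(K * Real.exp (-(b * y)))))) y :=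
      fun y => (hgd y).mul (hEd y)
    apply antitoneOn_of_deriv_nonpos (convex_Ici 0)
    · exact fun y _ => (hφd y).continuousAt.continuousWithinAt
    · exact fun y _ => ((hφd y).differentiableAt).differentiableWithinAt
    · intro y hy
      have hy0 : (0:ℝ) ≤ y := le_of_lt (by simpa using hy)
      rw [(hφd y).deriv]
      have h := hmem y
      have hEpos : 0 < E y := Real.exp_pos _
      have hexp : 0 < Real.exp y := Real.exp_pos _
      have hkey : (1 - ξ y) * (1 - ξ y ^ (ν + 1)) ≤ (1 - ξ y) * (K * Real.exp (-(b * y))) := by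
        apply mul_le_mul_of_nonneg_left _ (by linarith [h.2])
        calc 1 - ξ y ^ (ν + 1) ≤ (ν + 1) * (1 - ξ y) := hbern y
          _ ≤ (ν + 1) * ((1 - a) * Real.exp (-(b * y))) := by
              apply mul_le_mul_of_nonneg_left (hdecay y hy0) (by linarith)
          _ = K * Real.exp (-(b * y)) := by rw [hK]; ring
      have hgy : g y = (1 - ξ y) * Real.exp y := rfl
      have : Real.exp y * ((1 - ξ y) * (1 - ξ y ^ (ν + 1)))
          ≤ g y * (K * Real.exp (-(b * y))) := by
        rw [hgy]
        nlinarith [hkey]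
      nlinarith [mul_le_mul_of_nonneg_right this hEpos.le, hEpos]
  have hbdd : BddAbove (Set.range g) := by
    refine ⟨max (g 0) ((1 - a) * Real.exp (K / b)), ?_⟩
    rintro _ ⟨y, rfl⟩
    rcases le_total y 0 with hy | hy
    · exact le_max_of_le_left (hgmono hy)
    · apply le_max_of_le_right
      have h1 : φ y ≤ φ 0 := hφanti Set.self_mem_Ici hy hy
      have hφ0 : φ 0 = (1 - a) * Real.exp (K / b) := by
        simp [hφ, hg, hE, haa]
      have hEy : 1 ≤ E y := by
        apply Real.one_le_exp
        positivity
      have hgy : 0 ≤ g y := by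
        have h := hmem y
        have := (Real.exp_pos y).le
        simp only [hg]
        nlinarith [h.2]
      calc g y = g y * 1 := by ring
        _ ≤ g y * E y := by nlinarith
        _ = φ y := rfl
        _ ≤ (1 - a) * Real.exp (K / b) := by rw [← hφ0]; exact h1
  refine ⟨⨆ y, g y, ?_, tendsto_atTop_ciSup hgmono hbdd⟩
  have : g 0 ≤ ⨆ y, g y := le_ciSup hbdd 0
  have hg0 : g 0 = 1 - a := by simp [hg, haa]
  linarith [hg0 ▸ this]
end

section
/- Fix ξ₀ ∈ (0,1), M > 0, and y₀ with ξ(y₀) = ξ₀, where ξ solves ξ' = ξ^(ν+1)(1−ξ), ν > 1. Let K¹ be the operator K¹(g)(y) = ∫_{+∞}^{y} (1 − ξ(s)) N(g)(s) ds acting on continuous functions on [y₀,∞), where N is a linear operator satisfying: for every g with |g(y)| ≤ C(1−ξ(y))^n on [y₀,∞) (n ≥ 0 integer), |N(g)(y)| ≤ MC(1−ξ(y))^n. Define U⁰ ≡ 1 and U^N = K¹(U^{N−1}). Then for all N ≥ 0 and y ≥ y₀, |U^N(y)| ≤ (M/ξ₀^(ν+1))^N (1−ξ(y))^N / N!, the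 series U = Σ_{N≥0} U^N converges uniformly on [y₀,∞), satisfies |U(y)| ≤ exp(M/ξ₀^(ν+1)), and U is the unique solution of dU/dy = (1−ξ(y)) N(U) with U(y) → 1 as y → +∞. -/
open Filter Set MeasureTheory Topology

lemma expInt (y b : ℝ) (hb : 0 < b) :
    IntegrableOn (fun s => Real.exp (-(b * (s - y)))) (Ioi y) volume ∧
    ∫ s in Ioi y, Real.exp (-(b * (s - y))) = 1 / b := by
  have hi : IntegrableOn (fun s => Real.exp (-(b * (s - y)))) (Ioi y) volume := by
    have h := (exp_neg_integrableOn_Ioi y hb).const_mul (Real.exp (b * y))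
    refine h.congr (Filter.Eventually.of_forall fun s => ?_)
    simp only [← Real.exp_add]; ring_nf
  refine ⟨hi, ?_⟩
  have hderiv : ∀ x ∈ Ici y, HasDerivAt (fun s => -Real.exp (-(b * (s - y))) / b)
      (Real.exp (-(b * (x - y)))) x := by
    intro x _
    have h1 : HasDerivAt (fun s : ℝ => -(b * (s - y))) (-b) x := by
      exact (((hasDerivAt_id x).sub_const y).const_mul b).neg.congr_deriv (by simp)
    have := (h1.exp).neg.div_const b
    exact this.congr_deriv (by field_simp)
  have htend : Tendsto (fun s => -Real.exp (-(b * (s - y))) / b) atTop (𝓝 0) := by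
    have h1 : Tendsto (fun s : ℝ => s - y) atTop atTop := tendsto_atTop_add_const_right _ (-y) tendsto_id
    have h2 : Tendsto (fun s : ℝ => -(b * (s - y))) atTop atBot :=
      tendsto_neg_atBot_iff.mpr (h1.const_mul_atTop hb)
    have h3 : Tendsto (fun s : ℝ => Real.exp (-(b * (s - y)))) atTop (𝓝 0) :=
      Real.tendsto_exp_atBot.comp h2
    simpa using h3.neg.div_const b
  have := MeasureTheory.integral_Ioi_of_hasDerivAt_of_tendsto' hderiv hi htend
  rw [this]; field_simp; simp

lemma decayLem (ν ξ₀ y₀ : ℝ) (hν : 1 < ν) (hξ₀ : ξ₀ ∈ Set.Ioo (0:ℝ) 1)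
    (ξ : ℝ → ℝ) (hξy₀ : ξ y₀ = ξ₀)
    (hmem : ∀ y ∈ Set.Ici y₀, ξ y ∈ Set.Ioo (0:ℝ) 1)
    (hode : ∀ y ∈ Set.Ici y₀,
      HasDerivWithinAt ξ ((ξ y) ^ (ν + 1) * (1 - ξ y)) (Set.Ici y₀) y) :
    ∀ y ∈ Ici y₀, ∀ s ∈ Ici y, 1 - ξ s ≤ (1 - ξ y) * Real.exp (-(ξ₀ ^ (ν + 1) * (s - y))) := by
  set c := ξ₀ ^ (ν + 1) with hc_def
  have hν1 : (0:ℝ) ≤ ν + 1 := by linarith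
  have hc : 0 < c := Real.rpow_pos_of_pos hξ₀.1 _
  have hξc : ContinuousOn ξ (Ici y₀) := fun y hy => (hode y hy).continuousWithinAt
  have hIoi : ∀ x ∈ interior (Ici y₀), HasDerivWithinAt ξ ((ξ x) ^ (ν + 1) * (1 - ξ x))
      (interior (Ici y₀)) x := by
    intro x hx
    rw [interior_Ici] at hx ⊢
    exact (hode x (mem_Ici.mpr (le_of_lt (mem_Ioi.mp hx)))).mono Ioi_subset_Ici_self
  have hξmono : MonotoneOn ξ (Ici y₀) := by
    apply monotoneOn_of_hasDerivWithinAt_nonneg (convex_Ici y₀) hξc hIoi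
    intro x hx
    rw [interior_Ici] at hx
    have h := hmem x (mem_Ici.mpr (le_of_lt (mem_Ioi.mp hx)))
    have := Real.rpow_nonneg (le_of_lt h.1) (ν + 1)
    nlinarith [h.2]
  have hξ₀le : ∀ y ∈ Ici y₀, ξ₀ ≤ ξ y := by
    intro y hy
    rw [← hξy₀]
    exact hξmono self_mem_Ici hy hy
  -- antitone auxiliary function
  have hanti : AntitoneOn (fun s => (1 - ξ s) * Real.exp (c * s)) (Ici y₀) := by
    apply antitoneOn_of_hasDerivWithinAt_nonpos (convex_Ici y₀)
      (f' := fun x => (-((ξ x) ^ (ν + 1) * (1 - ξ x))) * Real.exp (c * x)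
        + (1 - ξ x) * (Real.exp (c * x) * c))
    · exact ((continuousOn_const.sub hξc).mul
        (Real.continuous_exp.comp (continuous_const.mul continuous_id)).continuousOn)
    · intro x hx
      have h1 : HasDerivWithinAt (fun s => 1 - ξ s) (-((ξ x) ^ (ν + 1) * (1 - ξ x)))
          (interior (Ici y₀)) x := by
        exact ((hasDerivWithinAt_const x _ (1:ℝ)).sub (hIoi x hx)).congr_deriv (by simp)
      have h2 : HasDerivAt (fun s : ℝ => Real.exp (c * s)) (Real.exp (c * x) * c) x := by
        exact ((Real.hasDerivAt_exp (c * x)).comp x ((hasDerivAt_id x).const_mul c)).congr_deriv (by simp)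
      exact h1.mul (h2.hasDerivWithinAt)
    · intro x hx
      rw [interior_Ici] at hx
      have hx' : x ∈ Ici y₀ := mem_Ici.mpr (le_of_lt (mem_Ioi.mp hx))
      have h := hmem x hx'
      have hcle : c ≤ (ξ x) ^ (ν + 1) :=
        Real.rpow_le_rpow (le_of_lt hξ₀.1) (hξ₀le x hx') hν1
      have hexp : (0:ℝ) < Real.exp (c * x) := Real.exp_pos _
      nlinarith [mul_nonneg (mul_nonneg (sub_nonneg.2 h.2.le) hexp.le) (sub_nonneg.2 hcle)]
  intro y hy s hs
  have hs' : s ∈ Ici y₀ := mem_Ici.mpr (le_trans (mem_Ici.mp hy) (mem_Ici.mp hs))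
  have := hanti hy hs' hs
  have hey : (0:ℝ) < Real.exp (c * y) := Real.exp_pos _
  have hes : (0:ℝ) < Real.exp (c * s) := Real.exp_pos _
  have h4 : Real.exp (-(c * (s - y))) = Real.exp (c * y) / Real.exp (c * s) := by
    rw [← Real.exp_sub]; ring_nf
  rw [h4, mul_div_assoc', le_div_iff₀ hes]
  simpa using this

lemma keyInt (ν ξ₀ y₀ : ℝ) (hν : 1 < ν) (hξ₀ : ξ₀ ∈ Set.Ioo (0:ℝ) 1)
    (ξ : ℝ → ℝ) (hξy₀ : ξ y₀ = ξ₀)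
    (hmem : ∀ y ∈ Set.Ici y₀, ξ y ∈ Set.Ioo (0:ℝ) 1)
    (hode : ∀ y ∈ Set.Ici y₀,
      HasDerivWithinAt ξ ((ξ y) ^ (ν + 1) * (1 - ξ y)) (Set.Ici y₀) y) :
    ∀ (k : ℕ), ∀ y ∈ Ici y₀,
      IntegrableOn (fun s => (1 - ξ s) ^ (k+1)) (Ioi y) volume ∧
      ∫ s in Ioi y, (1 - ξ s) ^ (k+1) ≤ (1 - ξ y) ^ (k+1) / ((k+1) * ξ₀ ^ (ν + 1)) := by
  intro k y hy
  set c := ξ₀ ^ (ν + 1) with hc_def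
  have hc : 0 < c := Real.rpow_pos_of_pos hξ₀.1 _
  set b := (k+1 : ℝ) * c with hb_def
  have hb : 0 < b := by positivity
  have hξc : ContinuousOn ξ (Ici y₀) := fun z hz => (hode z hz).continuousWithinAt
  have hdecay := decayLem ν ξ₀ y₀ hν hξ₀ ξ hξy₀ hmem hode
  have hbd : ∀ s ∈ Ioi y, (1 - ξ s) ^ (k+1) ≤ (1 - ξ y) ^ (k+1) * Real.exp (-(b * (s - y))) := by
    intro s hs
    have hs' : s ∈ Ici y := mem_Ici.mpr (le_of_lt (mem_Ioi.mp hs))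
    have hsy₀ : s ∈ Ici y₀ := mem_Ici.mpr (le_trans (mem_Ici.mp hy) (mem_Ici.mp hs'))
    have h0 : 0 ≤ 1 - ξ s := by have := (hmem s hsy₀).2; linarith
    have h1 := hdecay y hy s hs'
    calc (1 - ξ s) ^ (k+1) ≤ ((1 - ξ y) * Real.exp (-(c * (s - y)))) ^ (k+1) :=
          pow_le_pow_left₀ h0 h1 _
      _ = (1 - ξ y) ^ (k+1) * Real.exp (-(b * (s - y))) := by
          rw [mul_pow, ← Real.exp_nat_mul]
          congr 2
          push_cast
          ring
  have hgint : IntegrableOn (fun s => (1 - ξ y) ^ (k+1) * Real.exp (-(b * (s - y)))) (Ioi y) volume :=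
    (expInt y b hb).1.const_mul _
  have hmeas : AEStronglyMeasurable (fun s => (1 - ξ s) ^ (k+1)) (volume.restrict (Ioi y)) := by
    apply ContinuousOn.aestronglyMeasurable _ measurableSet_Ioi
    exact ((continuousOn_const.sub (hξc.mono (fun z hz => mem_Ici.mpr (le_trans (mem_Ici.mp hy) (le_of_lt (mem_Ioi.mp hz)))))).pow _)
  have hnonneg : ∀ s ∈ Ioi y, 0 ≤ (1 - ξ s) ^ (k+1) := by
    intro s hs
    have h2 := (hmem s (mem_Ici.mpr (le_trans (mem_Ici.mp hy) (le_of_lt (mem_Ioi.mp hs))))).2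
    have : (0:ℝ) ≤ 1 - ξ s := by linarith
    positivity
  have hfint : IntegrableOn (fun s => (1 - ξ s) ^ (k+1)) (Ioi y) volume := by
    apply Integrable.mono hgint hmeas
    filter_upwards [ae_restrict_mem measurableSet_Ioi] with s hs
    rw [Real.norm_eq_abs, Real.norm_eq_abs, abs_of_nonneg (hnonneg s hs)]
    exact le_trans (hbd s hs) (le_abs_self _)
  refine ⟨hfint, ?_⟩
  calc ∫ s in Ioi y, (1 - ξ s) ^ (k+1)
      ≤ ∫ s in Ioi y, (1 - ξ y) ^ (k+1) * Real.exp (-(b * (s - y))) :=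
        setIntegral_mono_on hfint hgint measurableSet_Ioi hbd
    _ = (1 - ξ y) ^ (k+1) * (1 / b) := by
        rw [integral_const_mul, (expInt y b hb).2]
    _ = (1 - ξ y) ^ (k+1) / ((k+1) * c) := by rw [mul_one_div, hb_def]

lemma NcOn (y₀ M : ℝ) (ξ : ℝ → ℝ) (N : (ℝ → ℝ) →ₗ[ℝ] (ℝ → ℝ))
    (hN : ∀ (g : ℝ → ℝ) (C : ℝ) (n : ℕ),
      (∀ y ∈ Set.Ici y₀, |g y| ≤ C * (1 - ξ y) ^ n) →
      ∀ y ∈ Set.Ici y₀, |N g y| ≤ M * C * (1 - ξ y) ^ n)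
    (hNc : ∀ g : ℝ → ℝ, Continuous g → Continuous (N g))
    (g : ℝ → ℝ) (hg : ContinuousOn g (Ici y₀)) : ContinuousOn (N g) (Ici y₀) := by
  set g' : ℝ → ℝ := fun y => g (max y y₀) with hg'_def
  have hg'c : Continuous g' :=
    hg.comp_continuous (continuous_id.max continuous_const) (fun x => mem_Ici.mpr (le_max_right _ _))
  have heq : EqOn (N g) (N g') (Ici y₀) := by
    intro y hy
    have h0 : ∀ z ∈ Set.Ici y₀, |(g - g') z| ≤ 0 * (1 - ξ z) ^ 0 := by
      intro z hz
      have : g' z = g z := by rw [hg'_def]; simp [max_eq_left (mem_Ici.mp hz)]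
      simp [Pi.sub_apply, this]
    have h1 := hN (g - g') 0 0 h0 y hy
    rw [map_sub] at h1
    simp only [Pi.sub_apply] at h1
    have : |N g y - N g' y| ≤ 0 := by simpa using h1
    have := abs_nonpos_iff.mp this
    linarith [sub_eq_zero.mp this]
  exact ((hNc g' hg'c).continuousOn).congr heq

lemma primDeriv (y₀ : ℝ) (f : ℝ → ℝ) (hfc : ContinuousOn f (Ici y₀))
    (hfi : IntegrableOn f (Ioi y₀) volume) :
    ∀ y ∈ Ici y₀, HasDerivWithinAt (fun u => ∫ s in Ioi u, f s) (-(f y)) (Ici y₀) y := by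
  have hsplit : ∀ u ∈ Ici y₀, ∫ s in Ioi u, f s = (∫ s in Ioi y₀, f s) - ∫ s in y₀..u, f s := by
    intro u hu
    have hun : Ioc y₀ u ∪ Ioi u = Ioi y₀ := Ioc_union_Ioi_eq_Ioi hu
    have hdisj : Disjoint (Ioc y₀ u) (Ioi u) := Ioc_disjoint_Ioi le_rfl
    have h1 : ∫ s in Ioi y₀, f s = (∫ s in Ioc y₀ u, f s) + ∫ s in Ioi u, f s := by
      rw [← hun, setIntegral_union hdisj measurableSet_Ioi
        (hfi.mono_set (by rw [← hun]; exact subset_union_left))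
        (hfi.mono_set (by rw [← hun]; exact subset_union_right))]
    rw [intervalIntegral.integral_of_le hu]
    linarith
  intro y hy
  have FTC : HasDerivWithinAt (fun u => ∫ s in y₀..u, f s) (f y) (Ici y₀) y := by
    rcases eq_or_lt_of_le (mem_Ici.mp hy) with h | h
    · subst h
      exact intervalIntegral.integral_hasDerivWithinAt_right (s := Ici y₀) (t := Ioi y₀)
        (by simp : IntervalIntegrable f volume y₀ y₀)
        ⟨Ici y₀, mem_of_superset self_mem_nhdsWithin Ioi_subset_Ici_self,
          hfc.aestronglyMeasurable measurableSet_Ici⟩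
        ((hfc y₀ self_mem_Ici).mono Ioi_subset_Ici_self)
    · have hIoi : Ioi y₀ ∈ 𝓝 y := Ioi_mem_nhds h
      have hIci : Ici y₀ ∈ 𝓝 y := mem_of_superset hIoi Ioi_subset_Ici_self
      have hii : IntervalIntegrable f volume y₀ y :=
        (intervalIntegrable_iff_integrableOn_Ioc_of_le hy).mpr (hfi.mono_set Ioc_subset_Ioi_self)
      exact (intervalIntegral.integral_hasDerivAt_right hii
        ⟨Ici y₀, hIci, hfc.aestronglyMeasurable measurableSet_Ici⟩
        (hfc.continuousAt hIci)).hasDerivWithinAt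
  have := (hasDerivWithinAt_const y (Ici y₀) (∫ s in Ioi y₀, f s)).sub FTC
  rw [zero_sub] at this
  exact this.congr (fun u hu => hsplit u hu) (hsplit y hy)

lemma stepLem (ν ξ₀ M y₀ : ℝ) (hν : 1 < ν) (hξ₀ : ξ₀ ∈ Set.Ioo (0:ℝ) 1) (hM : 0 < M)
    (ξ : ℝ → ℝ) (hξy₀ : ξ y₀ = ξ₀)
    (hmem : ∀ y ∈ Set.Ici y₀, ξ y ∈ Set.Ioo (0:ℝ) 1)
    (hode : ∀ y ∈ Set.Ici y₀,
      HasDerivWithinAt ξ ((ξ y) ^ (ν + 1) * (1 - ξ y)) (Set.Ici y₀) y)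
    (N : (ℝ → ℝ) →ₗ[ℝ] (ℝ → ℝ))
    (hN : ∀ (g : ℝ → ℝ) (C : ℝ) (n : ℕ),
      (∀ y ∈ Set.Ici y₀, |g y| ≤ C * (1 - ξ y) ^ n) →
      ∀ y ∈ Set.Ici y₀, |N g y| ≤ M * C * (1 - ξ y) ^ n)
    (hNc : ∀ g : ℝ → ℝ, Continuous g → Continuous (N g))
    (g : ℝ → ℝ) (C : ℝ) (n : ℕ) (hC : 0 ≤ C) (hgc : ContinuousOn g (Ici y₀))
    (hgb : ∀ y ∈ Set.Ici y₀, |g y| ≤ C * (1 - ξ y) ^ n) :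
    ContinuousOn (fun s => (1 - ξ s) * N g s) (Ici y₀) ∧
    ∀ y ∈ Ici y₀,
      IntegrableOn (fun s => (1 - ξ s) * N g s) (Ioi y) volume ∧
      |∫ s in Ioi y, (1 - ξ s) * N g s| ≤
        M * C * ((1 - ξ y) ^ (n+1) / ((n+1) * ξ₀ ^ (ν + 1))) := by
  have hξc : ContinuousOn ξ (Ici y₀) := fun z hz => (hode z hz).continuousWithinAt
  have hNg := hN g C n hgb
  have hNgc : ContinuousOn (N g) (Ici y₀) := NcOn y₀ M ξ N hN hNc g hgc
  have hfc : ContinuousOn (fun s => (1 - ξ s) * N g s) (Ici y₀) :=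
    (continuousOn_const.sub hξc).mul hNgc
  refine ⟨hfc, fun y hy => ?_⟩
  have hkey := keyInt ν ξ₀ y₀ hν hξ₀ ξ hξy₀ hmem hode n y hy
  have hbd : ∀ s ∈ Ioi y, |(1 - ξ s) * N g s| ≤ M * C * (1 - ξ s) ^ (n+1) := by
    intro s hs
    have hs' : s ∈ Ici y₀ := mem_Ici.mpr (le_trans (mem_Ici.mp hy) (le_of_lt (mem_Ioi.mp hs)))
    have h0 : 0 ≤ 1 - ξ s := by have := (hmem s hs').2; linarith
    rw [abs_mul, abs_of_nonneg h0, pow_succ]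
    calc (1 - ξ s) * |N g s| ≤ (1 - ξ s) * (M * C * (1 - ξ s) ^ n) :=
          mul_le_mul_of_nonneg_left (hNg s hs') h0
      _ = M * C * ((1 - ξ s) ^ n * (1 - ξ s)) := by ring
  have hgint : IntegrableOn (fun s => M * C * (1 - ξ s) ^ (n+1)) (Ioi y) volume :=
    hkey.1.const_mul _
  have hfint : IntegrableOn (fun s => (1 - ξ s) * N g s) (Ioi y) volume := by
    apply Integrable.mono hgint
      ((hfc.mono (fun z hz => le_trans hy (le_of_lt hz))).aestronglyMeasurable measurableSet_Ioi)
    filter_upwards [ae_restrict_mem measurableSet_Ioi] with s hs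
    rw [Real.norm_eq_abs, Real.norm_eq_abs]
    exact le_trans (hbd s hs) (le_abs_self _)
  refine ⟨hfint, ?_⟩
  calc |∫ s in Ioi y, (1 - ξ s) * N g s| ≤ ∫ s in Ioi y, M * C * (1 - ξ s) ^ (n+1) := by
        rw [← Real.norm_eq_abs]
        apply norm_integral_le_of_norm_le hgint
        filter_upwards [ae_restrict_mem measurableSet_Ioi] with s hs
        exact hbd s hs
    _ = M * C * ∫ s in Ioi y, (1 - ξ s) ^ (n+1) := integral_const_mul _ _
    _ ≤ M * C * ((1 - ξ y) ^ (n+1) / ((n+1) * ξ₀ ^ (ν + 1))) :=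
        mul_le_mul_of_nonneg_left hkey.2 (by positivity)

set_option maxHeartbeats 2000000 in
/-- The Volterra iteration U⁰ ≡ 1, U^{n+1} = K¹(U^n) with
K¹(g)(y) = ∫_{+∞}^y (1−ξ(s)) N(g)(s) ds converges to the unique solution of
U' = (1−ξ)N(U) tending to 1 at +∞, with the stated factorial estimates. -/
theorem stmt12 (ν ξ₀ M y₀ : ℝ) (hν : 1 < ν) (hξ₀ : ξ₀ ∈ Set.Ioo (0:ℝ) 1) (hM : 0 < M)
    (ξ : ℝ → ℝ) (hξy₀ : ξ y₀ = ξ₀)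
    (hmem : ∀ y ∈ Set.Ici y₀, ξ y ∈ Set.Ioo (0:ℝ) 1)
    (hode : ∀ y ∈ Set.Ici y₀,
      HasDerivWithinAt ξ ((ξ y) ^ (ν + 1) * (1 - ξ y)) (Set.Ici y₀) y)
    (N : (ℝ → ℝ) →ₗ[ℝ] (ℝ → ℝ))
    (hN : ∀ (g : ℝ → ℝ) (C : ℝ) (n : ℕ),
      (∀ y ∈ Set.Ici y₀, |g y| ≤ C * (1 - ξ y) ^ n) →
      ∀ y ∈ Set.Ici y₀, |N g y| ≤ M * C * (1 - ξ y) ^ n)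
    (hNc : ∀ g : ℝ → ℝ, Continuous g → Continuous (N g))
    (U : ℕ → ℝ → ℝ) (hU0 : U 0 = fun _ => 1)
    (hUrec : ∀ (n : ℕ) (y : ℝ), U (n + 1) y = -∫ s in Set.Ioi y, (1 - ξ s) * N (U n) s) :
    (∀ (n : ℕ), ∀ y ∈ Set.Ici y₀,
      |U n y| ≤ (M / ξ₀ ^ (ν + 1)) ^ n * (1 - ξ y) ^ n / n.factorial) ∧
    ∃ Us : ℝ → ℝ,
      TendstoUniformlyOn (fun n y => ∑ k ∈ Finset.range n, U k y) Us atTop (Set.Ici y₀) ∧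
      (∀ y ∈ Set.Ici y₀, |Us y| ≤ Real.exp (M / ξ₀ ^ (ν + 1))) ∧
      (∀ y ∈ Set.Ici y₀, HasDerivWithinAt Us ((1 - ξ y) * N Us y) (Set.Ici y₀) y) ∧
      Tendsto Us atTop (nhds 1) ∧
      ∀ V : ℝ → ℝ,
        (∀ y ∈ Set.Ici y₀, HasDerivWithinAt V ((1 - ξ y) * N V y) (Set.Ici y₀) y) →
        Tendsto V atTop (nhds 1) → Set.EqOn V Us (Set.Ici y₀) := by
  have hc : 0 < ξ₀ ^ (ν + 1) := Real.rpow_pos_of_pos hξ₀.1 _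
  set c : ℝ := ξ₀ ^ (ν + 1) with hc_def
  set a : ℝ := M / c with ha_def
  have ha : 0 < a := div_pos hM hc
  have hξc : ContinuousOn ξ (Ici y₀) := fun z hz => (hode z hz).continuousWithinAt
  have h1ξpos : ∀ y ∈ Ici y₀, 0 < 1 - ξ y := by
    intro y hy; have := (hmem y hy).2; linarith
  have h1ξle : ∀ y ∈ Ici y₀, 1 - ξ y ≤ 1 := by
    intro y hy; have := (hmem y hy).1; linarith
  -- algebraic identity for the induction step
  have halg : ∀ (K r : ℝ) (n : ℕ),
      M * (K * (a ^ n / n.factorial)) * (r ^ (n+1) / (((n:ℝ)+1) * c)) =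
      K * (a ^ (n+1) * r ^ (n+1) / (n+1).factorial) := by
    intro K r n
    have h1 : (n.factorial : ℝ) ≠ 0 := Nat.cast_ne_zero.2 n.factorial_ne_zero
    have h2 : ((n:ℝ)+1) ≠ 0 := by positivity
    have h3 : ((n+1).factorial : ℝ) = ((n:ℝ)+1) * n.factorial := by
      rw [Nat.factorial_succ]; push_cast; ring
    rw [ha_def, h3]
    have h4 : c ≠ 0 := hc.ne'
    field_simp
    linear_combination (-(K * r ^ (n+1) * (M / c) ^ n)) * (mul_div_cancel₀ M h4 : c * (M / c) = M)
  -- the main bound and continuity, by induction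
  have hmain : ∀ n : ℕ, (∀ y ∈ Ici y₀, |U n y| ≤ a ^ n * (1 - ξ y) ^ n / n.factorial) ∧
      ContinuousOn (U n) (Ici y₀) := by
    intro n
    induction n with
    | zero => refine ⟨fun y hy => by simp [hU0], by rw [hU0]; exact continuousOn_const⟩
    | succ n ih =>
      obtain ⟨ihb, ihc⟩ := ih
      have hC : (0:ℝ) ≤ a ^ n / n.factorial := by positivity
      have hgb : ∀ y ∈ Ici y₀, |U n y| ≤ (a ^ n / n.factorial) * (1 - ξ y) ^ n := by
        intro y hy
        refine le_trans (ihb y hy) (le_of_eq ?_); ring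
      have hstep := stepLem ν ξ₀ M y₀ hν hξ₀ hM ξ hξy₀ hmem hode N hN hNc (U n)
        (a ^ n / n.factorial) n hC ihc hgb
      constructor
      · intro y hy
        rw [hUrec n y, abs_neg]
        refine le_trans ((hstep.2 y hy).2) (le_of_eq ?_)
        have h := halg 1 (1 - ξ y) n
        rw [one_mul, one_mul] at h
        rw [← hc_def, h]
      · have heq : U (n+1) = fun y => -∫ s in Ioi y, (1 - ξ s) * N (U n) s := funext (hUrec n)
        rw [heq]
        have hfi : IntegrableOn (fun s => (1 - ξ s) * N (U n) s) (Ioi y₀) volume :=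
          (hstep.2 y₀ self_mem_Ici).1
        have hd := primDeriv y₀ _ hstep.1 hfi
        exact ContinuousOn.neg (fun y hy => (hd y hy).continuousWithinAt)
  refine ⟨fun n => (hmain n).1, ?_⟩
  -- uniform convergence machinery
  have hu : Summable (fun n : ℕ => a ^ n / n.factorial) := Real.summable_pow_div_factorial a
  have hbu : ∀ (n : ℕ), ∀ y ∈ Ici y₀, ‖U n y‖ ≤ a ^ n / n.factorial := by
    intro n y hy
    rw [Real.norm_eq_abs]
    refine le_trans ((hmain n).1 y hy) ?_
    have h1 : (1 - ξ y) ^ n ≤ 1 := pow_le_one₀ (h1ξpos y hy).le (h1ξle y hy)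
    have h2 : a ^ n * (1 - ξ y) ^ n ≤ a ^ n := by
      nlinarith [pow_nonneg ha.le n, pow_nonneg (h1ξpos y hy).le n]
    have h3 : (0:ℝ) < n.factorial := by positivity
    gcongr
  set Us : ℝ → ℝ := fun y => ∑' n, U n y with hUs_def
  have huc : TendstoUniformlyOn (fun n y => ∑ k ∈ Finset.range n, U k y) Us atTop (Ici y₀) :=
    tendstoUniformlyOn_tsum_nat hu (fun n x hx => hbu n x hx)
  have hsn : ∀ y ∈ Ici y₀, Summable (fun k => ‖U k y‖) := by
    intro y hy
    exact Summable.of_nonneg_of_le (fun k => norm_nonneg _) (fun k => hbu k y hy) hu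
  have hsum : ∀ y ∈ Ici y₀, Summable (fun k => U k y) := fun y hy => (hsn y hy).of_norm
  have hexp_tsum : Real.exp a = ∑' n : ℕ, a ^ n / n.factorial := by
    rw [Real.exp_eq_exp_ℝ, NormedSpace.exp_eq_tsum_div]
  have hUsb : ∀ y ∈ Ici y₀, |Us y| ≤ Real.exp a := by
    intro y hy
    rw [hexp_tsum]
    calc |Us y| = ‖∑' n, U n y‖ := by rw [hUs_def]; exact (Real.norm_eq_abs _).symm
      _ ≤ ∑' n, ‖U n y‖ := norm_tsum_le_tsum_norm (hsn y hy)
      _ ≤ ∑' n, a ^ n / n.factorial := Summable.tsum_le_tsum (fun n => hbu n y hy) (hsn y hy) hu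
  have hSc : ∀ n : ℕ, ContinuousOn (fun y => ∑ k ∈ Finset.range n, U k y) (Ici y₀) := by
    intro n
    exact continuousOn_finset_sum _ (fun i _ => (hmain i).2)
  have hUsc : ContinuousOn Us (Ici y₀) := huc.continuousOn (Eventually.of_forall hSc).frequently
  have hUsgb : ∀ y ∈ Ici y₀, |Us y| ≤ Real.exp a * (1 - ξ y) ^ 0 := by
    intro y hy; simpa using hUsb y hy
  have hstepUs := stepLem ν ξ₀ M y₀ hν hξ₀ hM ξ hξy₀ hmem hode N hN hNc Us (Real.exp a) 0
    (Real.exp_nonneg a) hUsc hUsgb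
  -- per-iterate integrability data
  have hUstep : ∀ k : ℕ, ContinuousOn (fun s => (1 - ξ s) * N (U k) s) (Ici y₀) ∧
      ∀ y ∈ Ici y₀, IntegrableOn (fun s => (1 - ξ s) * N (U k) s) (Ioi y) volume ∧
        |∫ s in Ioi y, (1 - ξ s) * N (U k) s| ≤
          M * (a ^ k / k.factorial) * ((1 - ξ y) ^ (k+1) / ((k+1) * ξ₀ ^ (ν + 1))) := by
    intro k
    apply stepLem ν ξ₀ M y₀ hν hξ₀ hM ξ hξy₀ hmem hode N hN hNc (U k)
      (a ^ k / k.factorial) k (by positivity) (hmain k).2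
    intro y hy; refine le_trans ((hmain k).1 y hy) (le_of_eq ?_); ring
  have hNsum : ∀ (n : ℕ) (s : ℝ), N (fun z => ∑ k ∈ Finset.range n, U k z) s
      = ∑ k ∈ Finset.range n, N (U k) s := by
    intro n s
    have h1 : (fun z => ∑ k ∈ Finset.range n, U k z) = ∑ k ∈ Finset.range n, U k := by
      funext z; simp
    rw [h1, map_sum]
    simp
  have hintsum : ∀ (n : ℕ) (s : ℝ), (1 - ξ s) * N (fun z => ∑ k ∈ Finset.range n, U k z) s
      = ∑ k ∈ Finset.range n, (1 - ξ s) * N (U k) s := by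
    intro n s; rw [hNsum n s, Finset.mul_sum]
  have hSrec : ∀ (n : ℕ), ∀ y ∈ Ici y₀, (∑ k ∈ Finset.range (n+1), U k y) =
      1 - ∫ s in Ioi y, (1 - ξ s) * N (fun z => ∑ k ∈ Finset.range n, U k z) s := by
    intro n y hy
    rw [Finset.sum_range_succ']
    simp only [hU0]
    rw [show (∑ k ∈ Finset.range n, U (k+1) y)
        = ∑ k ∈ Finset.range n, -∫ s in Ioi y, (1 - ξ s) * N (U k) s from
      Finset.sum_congr rfl fun k _ => hUrec k y]
    simp only [hintsum n]
    rw [integral_finset_sum _ (fun i _ => ((hUstep i).2 y hy).1)]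
    rw [Finset.sum_neg_distrib]
    ring
  -- identity for the limit function
  set t : ℕ → ℝ := fun n => ∑' i : ℕ, a ^ (i+n) / (i+n).factorial with ht_def
  have htnonneg : ∀ n, 0 ≤ t n := by
    intro n
    apply tsum_nonneg
    intro i; positivity
  have httend : Tendsto t atTop (𝓝 0) := by
    have h := tendsto_sum_nat_add (fun n : ℕ => a ^ n / n.factorial)
    exact h
  have htail : ∀ (n : ℕ), ∀ z ∈ Ici y₀,
      |(∑ k ∈ Finset.range n, U k z) - Us z| ≤ t n := by
    intro n z hz
    have hs := Summable.sum_add_tsum_nat_add n (hsum z hz)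
    have h1 : (∑ k ∈ Finset.range n, U k z) - Us z = -(∑' i, U (i+n) z) := by
      rw [hUs_def]; simp only; linarith [hs]
    rw [h1, abs_neg]
    have hsn' : Summable (fun i => ‖U (i+n) z‖) := by
      exact (summable_nat_add_iff n).mpr (hsn z hz)
    calc |∑' i, U (i+n) z| = ‖∑' i, U (i+n) z‖ := (Real.norm_eq_abs _).symm
      _ ≤ ∑' i, ‖U (i+n) z‖ := norm_tsum_le_tsum_norm hsn'
      _ ≤ t n := Summable.tsum_le_tsum (fun i => hbu (i+n) z hz) hsn' ((summable_nat_add_iff n).mpr hu)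
  have hUsEq : ∀ y ∈ Ici y₀, Us y = 1 - ∫ s in Ioi y, (1 - ξ s) * N Us s := by
    intro y hy
    have h1 : Tendsto (fun n : ℕ => ∑ k ∈ Finset.range (n+1), U k y) atTop (𝓝 (Us y)) :=
      (huc.tendsto_at hy).comp (tendsto_add_atTop_nat 1)
    have hfUsi : IntegrableOn (fun s => (1 - ξ s) * N Us s) (Ioi y) volume :=
      (hstepUs.2 y hy).1
    have hItend : Tendsto
        (fun n : ℕ => ∫ s in Ioi y, (1 - ξ s) * N (fun z => ∑ k ∈ Finset.range n, U k z) s)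
        atTop (𝓝 (∫ s in Ioi y, (1 - ξ s) * N Us s)) := by
      rw [← tendsto_sub_nhds_zero_iff]
      apply squeeze_zero_norm (a := fun n => M * t n * (1 / c))
      · intro n
        have hgb' : ∀ z ∈ Set.Ici y₀,
            |(fun w => (∑ k ∈ Finset.range n, U k w) - Us w) z| ≤ t n * (1 - ξ z) ^ 0 := by
          intro z hz; simpa using htail n z hz
        have hstepn := stepLem ν ξ₀ M y₀ hν hξ₀ hM ξ hξy₀ hmem hode N hN hNc
          (fun w => (∑ k ∈ Finset.range n, U k w) - Us w) (t n) 0 (htnonneg n)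
          ((hSc n).sub hUsc) hgb'
        have hfSni : IntegrableOn
            (fun s => (1 - ξ s) * N (fun z => ∑ k ∈ Finset.range n, U k z) s) (Ioi y) volume := by
          simp only [hintsum n]
          exact integrable_finset_sum _ (fun i _ => ((hUstep i).2 y hy).1)
        have hgneq : (fun w => (∑ k ∈ Finset.range n, U k w) - Us w)
            = (fun z => ∑ k ∈ Finset.range n, U k z) - Us := by
          funext w; simp [Pi.sub_apply]
        have hptw : ∀ s : ℝ,
            (1 - ξ s) * N (fun w => (∑ k ∈ Finset.range n, U k w) - Us w) s
            = (1 - ξ s) * N (fun z => ∑ k ∈ Finset.range n, U k z) s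
              - (1 - ξ s) * N Us s := by
          intro s
          rw [hgneq, map_sub]
          simp only [Pi.sub_apply]
          ring
        calc ‖(∫ s in Ioi y, (1 - ξ s) * N (fun z => ∑ k ∈ Finset.range n, U k z) s)
              - ∫ s in Ioi y, (1 - ξ s) * N Us s‖
            = |∫ s in Ioi y, (1 - ξ s) * N (fun w => (∑ k ∈ Finset.range n, U k w) - Us w) s| := by
              rw [Real.norm_eq_abs, ← integral_sub hfSni hfUsi]
              congr 1
              apply setIntegral_congr_fun measurableSet_Ioi
              intro s _
              exact (hptw s).symm
          _ ≤ M * t n * ((1 - ξ y) ^ (0+1) / (((0:ℕ)+1) * ξ₀ ^ (ν + 1))) := (hstepn.2 y hy).2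
          _ ≤ M * t n * (1 / c) := by
              apply mul_le_mul_of_nonneg_left _ (mul_nonneg hM.le (htnonneg n))
              have h9 : (((0:ℕ):ℝ)+1) * ξ₀ ^ (ν+1) = c := by rw [← hc_def]; norm_num
              rw [h9]
              gcongr
              rw [pow_one]
              exact h1ξle y hy
      · have : Tendsto (fun n => M * t n * (1 / c)) atTop (𝓝 (M * 0 * (1 / c))) :=
          (httend.const_mul M).mul_const _
        simpa using this
    have h2 : Tendsto (fun n : ℕ => ∑ k ∈ Finset.range (n+1), U k y) atTop
        (𝓝 (1 - ∫ s in Ioi y, (1 - ξ s) * N Us s)) := by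
      apply Tendsto.congr' _ (tendsto_const_nhds.sub hItend)
      filter_upwards with n
      exact (hSrec n y hy).symm
    exact tendsto_nhds_unique h1 h2
  -- derivative of Us
  have hfUsint : IntegrableOn (fun s => (1 - ξ s) * N Us s) (Ioi y₀) volume :=
    (hstepUs.2 y₀ self_mem_Ici).1
  have hdUs := primDeriv y₀ _ hstepUs.1 hfUsint
  have hUsODE : ∀ y ∈ Ici y₀, HasDerivWithinAt Us ((1 - ξ y) * N Us y) (Ici y₀) y := by
    intro y hy
    have h := (hasDerivWithinAt_const y (Ici y₀) (1:ℝ)).sub (hdUs y hy)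
    rw [zero_sub, neg_neg] at h
    exact h.congr (fun u hu => hUsEq u hu) (hUsEq y hy)
  -- limit of Us at infinity
  have hdecay := decayLem ν ξ₀ y₀ hν hξ₀ ξ hξy₀ hmem hode
  have hUslim : Tendsto Us atTop (𝓝 1) := by
    have key : Tendsto (fun y => Us y - 1) atTop (𝓝 0) := by
      apply squeeze_zero_norm'
        (a := fun y => (M * Real.exp a * ((1 - ξ₀) / c)) * Real.exp (-(c * (y - y₀))))
      · filter_upwards [eventually_ge_atTop y₀] with y hy
        have h2 := (hstepUs.2 y hy).2
        have h3 : 1 - ξ y ≤ (1 - ξ₀) * Real.exp (-(c * (y - y₀))) := by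
          have h4 := hdecay y₀ self_mem_Ici y hy
          rwa [hξy₀, ← hc_def] at h4
        calc ‖Us y - 1‖ = |∫ s in Ioi y, (1 - ξ s) * N Us s| := by
              rw [Real.norm_eq_abs, hUsEq y hy,
                show ∀ x : ℝ, 1 - x - 1 = -x from fun x => by ring, abs_neg]
          _ ≤ M * Real.exp a * ((1 - ξ y) ^ (0+1) / ((((0:ℕ):ℝ)+1) * ξ₀ ^ (ν+1))) := h2
          _ = M * Real.exp a * ((1 - ξ y) / c) := by rw [← hc_def]; norm_num
          _ ≤ M * Real.exp a * (((1 - ξ₀) * Real.exp (-(c * (y - y₀)))) / c) := by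
              apply mul_le_mul_of_nonneg_left _ (mul_nonneg hM.le (Real.exp_nonneg a))
              gcongr
          _ = (M * Real.exp a * ((1 - ξ₀) / c)) * Real.exp (-(c * (y - y₀))) := by ring
      · have h1 : Tendsto (fun y : ℝ => y - y₀) atTop atTop :=
          tendsto_atTop_add_const_right _ _ tendsto_id
        have h2 : Tendsto (fun y : ℝ => -(c * (y - y₀))) atTop atBot :=
          tendsto_neg_atBot_iff.mpr (h1.const_mul_atTop hc)
        have h3 := Real.tendsto_exp_atBot.comp h2
        have h4 := h3.const_mul (M * Real.exp a * ((1 - ξ₀) / c))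
        simpa using h4
    have h5 := key.add_const 1
    simpa using h5
  refine ⟨Us, huc, hUsb, hUsODE, hUslim, ?_⟩
  -- uniqueness
  intro V hV hVlim
  have hVc : ContinuousOn V (Ici y₀) := fun z hz => (hV z hz).continuousWithinAt
  set W : ℝ → ℝ := fun z => V z - Us z with hW_def
  have hWc : ContinuousOn W (Ici y₀) := hVc.sub hUsc
  have hWlim : Tendsto W atTop (𝓝 0) := by
    have h := hVlim.sub hUslim
    norm_num at h
    exact h
  have hev : ∀ᶠ z in atTop, |W z| < 1 := by
    have h := Metric.tendsto_nhds.mp hWlim 1 one_pos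
    simpa [Real.dist_eq] using h
  obtain ⟨T, hT⟩ := eventually_atTop.mp hev
  obtain ⟨B, hB⟩ := (isCompact_Icc (a := y₀) (b := max T y₀)).exists_bound_of_continuousOn
    (hWc.mono (fun z hz => hz.1))
  set C₀ : ℝ := max B 1 with hC0_def
  have hC0 : 0 ≤ C₀ := le_trans zero_le_one (le_max_right _ _)
  have hWb0 : ∀ z ∈ Ici y₀, |W z| ≤ C₀ := by
    intro z hz
    rcases le_or_gt z (max T y₀) with h | h
    · exact le_trans (by simpa [Real.norm_eq_abs] using hB z ⟨hz, h⟩) (le_max_left _ _)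
    · exact le_trans (hT z (le_trans (le_max_left _ _) h.le)).le (le_max_right _ _)
  have hNW : ∀ z, N W z = N V z - N Us z := by
    have hWfun : W = V - Us := by funext w; simp [hW_def]
    intro z
    rw [hWfun, map_sub]
    simp
  have hWd : ∀ z ∈ Ici y₀, HasDerivWithinAt W ((1 - ξ z) * N W z) (Ici y₀) z := by
    intro z hz
    have h := (hV z hz).sub (hUsODE z hz)
    have h6 : (1 - ξ z) * N V z - (1 - ξ z) * N Us z = (1 - ξ z) * N W z := by
      rw [hNW z]; ring
    rw [h6] at h
    exact h
  have hfW := stepLem ν ξ₀ M y₀ hν hξ₀ hM ξ hξy₀ hmem hode N hN hNc W C₀ 0 hC0 hWc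
    (fun z hz => by simpa using hWb0 z hz)
  have hWeq : ∀ y ∈ Ici y₀, W y = -∫ s in Ioi y, (1 - ξ s) * N W s := by
    intro y hy
    have hfWi : IntegrableOn (fun s => (1 - ξ s) * N W s) (Ioi y) volume := (hfW.2 y hy).1
    have hTi : Tendsto (fun T => ∫ s in y..T, (1 - ξ s) * N W s) atTop
        (𝓝 (∫ s in Ioi y, (1 - ξ s) * N W s)) :=
      intervalIntegral_tendsto_integral_Ioi y hfWi tendsto_id
    have hT2 : Tendsto (fun T => W T - W y) atTop (𝓝 (0 - W y)) := hWlim.sub_const _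
    have hEq : ∀ᶠ T in atTop, (∫ s in y..T, (1 - ξ s) * N W s) = W T - W y := by
      filter_upwards [eventually_ge_atTop y] with T hTy
      apply intervalIntegral.integral_eq_sub_of_hasDeriv_right_of_le hTy
      · exact hWc.mono (fun z hz => le_trans hy hz.1)
      · intro x hx
        exact (hWd x (le_trans hy hx.1.le)).mono
          (fun u hu => le_trans (le_trans hy hx.1.le) hu.le)
      · exact (intervalIntegrable_iff_integrableOn_Ioc_of_le hTy).mpr
          (hfWi.mono_set Ioc_subset_Ioi_self)
    have h7 := tendsto_nhds_unique (hTi.congr' hEq) hT2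
    linarith
  have hWbd : ∀ n : ℕ, ∀ z ∈ Ici y₀, |W z| ≤ C₀ * (a ^ n * (1 - ξ z) ^ n / n.factorial) := by
    intro n
    induction n with
    | zero => intro z hz; simpa using hWb0 z hz
    | succ n ih =>
      intro z hz
      have hstepW := stepLem ν ξ₀ M y₀ hν hξ₀ hM ξ hξy₀ hmem hode N hN hNc W
        (C₀ * (a ^ n / (n.factorial : ℝ))) n
        (mul_nonneg hC0 (by positivity)) hWc
        (fun w hw => le_trans (ih w hw) (le_of_eq (by ring)))
      rw [hWeq z hz, abs_neg]
      refine le_trans ((hstepW.2 z hz).2) (le_of_eq ?_)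
      rw [← hc_def]
      exact halg C₀ (1 - ξ z) n
  intro z hz
  have hble : ∀ n : ℕ, |W z| ≤ C₀ * (a ^ n / n.factorial) := by
    intro n
    have h2 : a ^ n * (1 - ξ z) ^ n / (n.factorial : ℝ) ≤ a ^ n / n.factorial := by
      have h1 : (1 - ξ z) ^ n ≤ 1 := pow_le_one₀ (h1ξpos z hz).le (h1ξle z hz)
      have h2' : a ^ n * (1 - ξ z) ^ n ≤ a ^ n := by
        nlinarith [pow_nonneg ha.le n, pow_nonneg (h1ξpos z hz).le n]
      have h3 : (0:ℝ) < n.factorial := by positivity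
      gcongr
    exact le_trans (hWbd n z hz) (mul_le_mul_of_nonneg_left h2 hC0)
  have h0 : Tendsto (fun n : ℕ => C₀ * (a ^ n / n.factorial)) atTop (𝓝 0) := by
    have h := (FloorSemiring.tendsto_pow_div_factorial_atTop a).const_mul C₀
    simpa using h
  have h8 : |W z| ≤ 0 := ge_of_tendsto h0 (Eventually.of_forall hble)
  have h9 : W z = 0 := abs_nonpos_iff.mp (by exact h8)
  have : V z - Us z = 0 := h9
  linarith
end

section
/- Let ν > 1, r ∈ ℂ, and consider the recurrence (for j ≥ 1): ν(j+1)A₁,ⱼ₊₁ = A₃,ⱼ − rA₄,ⱼ − B₃,ⱼ; (ν(j+1)+1)A₂,ⱼ₊₁ = rA₂,ⱼ − A₃,ⱼ − B₁,ⱼ − B₅,ⱼ; (ν(j+1)+1)A₃,ⱼ₊₁ = A₁,ⱼ + A₂,ⱼ + rA₃,ⱼ − A₄,ⱼ − B₂,ⱼ − B₆,ⱼ; (ν(j+1)+1)A₄,ⱼ₊₁ = −A₃,ⱼ + rA₄,ⱼ + B₃,ⱼ; (ν(j+1)+1)B₁,ⱼ₊₁ = −rB₁,ⱼ − B₂,ⱼ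 − B₄,ⱼ − rB₅,ⱼ − A₁,ⱼ + (r²−1)A₂,ⱼ; (ν(j+1)+1)B₂,ⱼ₊₁ = B₁,ⱼ − rB₂,ⱼ + B₃,ⱼ − rB₆,ⱼ + rA₁,ⱼ + (r²−1)A₃,ⱼ; (ν(j+1)+1)B₃,ⱼ₊₁ = B₂,ⱼ − rB₃,ⱼ + B₆,ⱼ + (1−r²)A₄,ⱼ; (ν(j+1)+2)B₄,ⱼ₊₁ = −B₁,ⱼ + B₅,ⱼ + rA₂,ⱼ + A₃,ⱼ; (ν(j+1)+2)B₅,ⱼ₊₁ = B₄,ⱼ − B₆,ⱼ − A₄,ⱼ; (ν(j+1)+2)B₆,ⱼ₊₁ = B₃,ⱼ + B₅,ⱼ + rA₄,ⱼ. If |r| ≤ 1, then there exists C > 0 (depending only on the initial data at j = 1) such that for all j ≥ 1, Σₚ |Aₚ,ⱼ| + Σ_q |B_q,ⱼ| ≤ (C/ν)^j / j!. Consequently, the power series Σⱼ Aₚ,ⱼ ζ^j and Σⱼ B_q,ⱼ ζ^j have infinite radius of convergence. -/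
noncomputable def Saux (A : Fin 4 → ℕ → ℂ) (B : Fin 6 → ℕ → ℂ) (j : ℕ) : ℝ :=
  (∑ p : Fin 4, ‖A p j‖) + (∑ q : Fin 6, ‖B q j‖)

lemma Saux_nonneg (A : Fin 4 → ℕ → ℂ) (B : Fin 6 → ℕ → ℂ) (j : ℕ) : 0 ≤ Saux A B j := by
  unfold Saux
  have h1 : (0:ℝ) ≤ ∑ p : Fin 4, ‖A p j‖ :=
    Finset.sum_nonneg fun i _ => norm_nonneg _
  have h2 : (0:ℝ) ≤ ∑ q : Fin 6, ‖B q j‖ :=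
    Finset.sum_nonneg fun i _ => norm_nonneg _
  linarith

lemma le_SA (A : Fin 4 → ℕ → ℂ) (B : Fin 6 → ℕ → ℂ) (p : Fin 4) (j : ℕ) :
    ‖A p j‖ ≤ Saux A B j := by
  have h1 : ‖A p j‖ ≤ ∑ p' : Fin 4, ‖A p' j‖ :=
    Finset.single_le_sum (f := fun p' => ‖A p' j‖)
      (fun i _ => norm_nonneg _) (Finset.mem_univ p)
  have h2 : (0:ℝ) ≤ ∑ q : Fin 6, ‖B q j‖ :=
    Finset.sum_nonneg fun i _ => norm_nonneg _
  unfold Saux; linarith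

lemma le_SB (A : Fin 4 → ℕ → ℂ) (B : Fin 6 → ℕ → ℂ) (q : Fin 6) (j : ℕ) :
    ‖B q j‖ ≤ Saux A B j := by
  have h1 : ‖B q j‖ ≤ ∑ q' : Fin 6, ‖B q' j‖ :=
    Finset.single_le_sum (f := fun q' => ‖B q' j‖)
      (fun i _ => norm_nonneg _) (Finset.mem_univ q)
  have h2 : (0:ℝ) ≤ ∑ p : Fin 4, ‖A p j‖ :=
    Finset.sum_nonneg fun i _ => norm_nonneg _
  unfold Saux; linarith

lemma comb {S : ℝ} {c1 c2 c3 c4 c5 c6 z1 z2 z3 z4 z5 z6 : ℂ}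
    (hc1 : ‖c1‖ ≤ 2) (hc2 : ‖c2‖ ≤ 2) (hc3 : ‖c3‖ ≤ 2)
    (hc4 : ‖c4‖ ≤ 2) (hc5 : ‖c5‖ ≤ 2) (hc6 : ‖c6‖ ≤ 2)
    (hz1 : ‖z1‖ ≤ S) (hz2 : ‖z2‖ ≤ S) (hz3 : ‖z3‖ ≤ S)
    (hz4 : ‖z4‖ ≤ S) (hz5 : ‖z5‖ ≤ S) (hz6 : ‖z6‖ ≤ S) :
    ‖c1*z1 + c2*z2 + c3*z3 + c4*z4 + c5*z5 + c6*z6‖ ≤ 12 * S := by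
  have hS : 0 ≤ S := le_trans (norm_nonneg z1) hz1
  have h : ∀ (c z : ℂ), ‖c‖ ≤ 2 → ‖z‖ ≤ S →
      ‖c*z‖ ≤ 2*S := by
    intro c z hc hz
    rw [norm_mul]
    exact mul_le_mul hc hz (norm_nonneg z) (by norm_num)
  have p1 := h c1 z1 hc1 hz1
  have p2 := h c2 z2 hc2 hz2
  have p3 := h c3 z3 hc3 hz3
  have p4 := h c4 z4 hc4 hz4
  have p5 := h c5 z5 hc5 hz5
  have p6 := h c6 z6 hc6 hz6
  have q1 := norm_add_le (c1*z1) (c2*z2)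
  have q2 := norm_add_le (c1*z1 + c2*z2) (c3*z3)
  have q3 := norm_add_le (c1*z1 + c2*z2 + c3*z3) (c4*z4)
  have q4 := norm_add_le (c1*z1 + c2*z2 + c3*z3 + c4*z4) (c5*z5)
  have q5 := norm_add_le (c1*z1 + c2*z2 + c3*z3 + c4*z4 + c5*z5) (c6*z6)
  linarith

lemma keyle {m d a R T : ℝ} (hm : 0 < m) (hmd : m ≤ d) (heq : d * a = R)
    (hR0 : 0 ≤ R) (hR : R ≤ T) : a ≤ T / m := by
  have hd : 0 < d := lt_of_lt_of_le hm hmd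
  have ha : a = R / d := by
    field_simp
    linarith [heq]
  rw [ha]
  exact div_le_div₀ (le_trans hR0 hR) hR hm hmd

/-- Factorial decay of the recurrence coefficients of the limiting Evans-function
expansion, and infinite radius of convergence of the associated power series. -/
theorem stmt14 (ν : ℝ) (hν : 1 < ν) (r : ℂ) (hr : ‖r‖ ≤ 1)
    (A : Fin 4 → ℕ → ℂ) (B : Fin 6 → ℕ → ℂ)
    (h1 : ∀ j : ℕ, 1 ≤ j →
      (ν : ℂ) * (j + 1) * A 0 (j + 1) = A 2 j - r * A 3 j - B 2 j)
    (h2 : ∀ j : ℕ, 1 ≤ j →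
      ((ν : ℂ) * (j + 1) + 1) * A 1 (j + 1) = r * A 1 j - A 2 j - B 0 j - B 4 j)
    (h3 : ∀ j : ℕ, 1 ≤ j →
      ((ν : ℂ) * (j + 1) + 1) * A 2 (j + 1) =
        A 0 j + A 1 j + r * A 2 j - A 3 j - B 1 j - B 5 j)
    (h4 : ∀ j : ℕ, 1 ≤ j →
      ((ν : ℂ) * (j + 1) + 1) * A 3 (j + 1) = -A 2 j + r * A 3 j + B 2 j)
    (h5 : ∀ j : ℕ, 1 ≤ j →
      ((ν : ℂ) * (j + 1) + 1) * B 0 (j + 1) =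
        -r * B 0 j - B 1 j - B 3 j - r * B 4 j - A 0 j + (r ^ 2 - 1) * A 1 j)
    (h6 : ∀ j : ℕ, 1 ≤ j →
      ((ν : ℂ) * (j + 1) + 1) * B 1 (j + 1) =
        B 0 j - r * B 1 j + B 2 j - r * B 5 j + r * A 0 j + (r ^ 2 - 1) * A 2 j)
    (h7 : ∀ j : ℕ, 1 ≤ j →
      ((ν : ℂ) * (j + 1) + 1) * B 2 (j + 1) =
        B 1 j - r * B 2 j + B 5 j + (1 - r ^ 2) * A 3 j)
    (h8 : ∀ j : ℕ, 1 ≤ j →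
      ((ν : ℂ) * (j + 1) + 2) * B 3 (j + 1) = -B 0 j + B 4 j + r * A 1 j + A 2 j)
    (h9 : ∀ j : ℕ, 1 ≤ j →
      ((ν : ℂ) * (j + 1) + 2) * B 4 (j + 1) = B 3 j - B 5 j - A 3 j)
    (h10 : ∀ j : ℕ, 1 ≤ j →
      ((ν : ℂ) * (j + 1) + 2) * B 5 (j + 1) = B 2 j + B 4 j + r * A 3 j) :
    ∃ C : ℝ, 0 < C ∧
      (∀ j : ℕ, 1 ≤ j →
        (∑ p : Fin 4, ‖A p j‖) + (∑ q : Fin 6, ‖B q j‖) ≤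
          (C / ν) ^ j / j.factorial) ∧
      (∀ (p : Fin 4) (ζ : ℂ), Summable fun j : ℕ => A p j * ζ ^ j) ∧
      (∀ (q : Fin 6) (ζ : ℂ), Summable fun j : ℕ => B q j * ζ ^ j) := by
  have hν0 : (0:ℝ) < ν := lt_trans one_pos hν
  set S : ℕ → ℝ := Saux A B with hSdef
  -- coefficient bounds
  have hc_one : ‖(1:ℂ)‖ ≤ 2 := by simp
  have hc_negone : ‖(-1:ℂ)‖ ≤ 2 := by simp
  have hc_r : ‖r‖ ≤ 2 := le_trans hr one_le_two
  have hc_negr : ‖-r‖ ≤ 2 := by rw [norm_neg]; exact hc_r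
  have hc_zero : ‖(0:ℂ)‖ ≤ 2 := by simp
  have hc_r2 : ‖r^2 - 1‖ ≤ 2 := by
    have h0 : ‖r^2 + (-1)‖ ≤ ‖r^2‖ + ‖(-1:ℂ)‖ :=
      norm_add_le _ _
    have e1 : ‖(-1:ℂ)‖ = 1 := by
      rw [norm_neg, norm_one]
    have e2 : ‖r^2‖ = ‖r‖ * ‖r‖ := by
      rw [sq, norm_mul]
    have e3 : r^2 - 1 = r^2 + (-1) := by ring
    rw [e3]
    nlinarith [norm_nonneg r]
  have hc_r2' : ‖1 - r^2‖ ≤ 2 := by rwa [norm_sub_rev]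
  -- the key one-step bound
  have hstep : ∀ j : ℕ, 1 ≤ j → S (j+1) ≤ 120 * S j / (ν * (j+1)) := by
    intro j hj
    have hm : (0:ℝ) < ν * (j+1) := by positivity
    have hz0 : ‖(0:ℂ)‖ ≤ S j := by
      simpa using Saux_nonneg A B j
    have hA := fun p => le_SA A B p j
    have hB := fun q => le_SB A B q j
    -- denominators
    have d0 : ‖(ν:ℂ) * (↑j + 1)‖ = ν * (j+1) := by
      have e : ((ν:ℂ) * (↑j + 1)) = ((ν * (j+1) : ℝ) : ℂ) := by push_cast; ring
      rw [e, Complex.norm_real, Real.norm_eq_abs, abs_of_pos hm]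
    have d1 : ‖(ν:ℂ) * (↑j + 1) + 1‖ = ν * (j+1) + 1 := by
      have e : ((ν:ℂ) * (↑j + 1) + 1) = ((ν * (j+1) + 1 : ℝ) : ℂ) := by push_cast; ring
      rw [e, Complex.norm_real, Real.norm_eq_abs, abs_of_pos (by linarith)]
    have d2 : ‖(ν:ℂ) * (↑j + 1) + 2‖ = ν * (j+1) + 2 := by
      have e : ((ν:ℂ) * (↑j + 1) + 2) = ((ν * (j+1) + 2 : ℝ) : ℂ) := by push_cast; ring
      rw [e, Complex.norm_real, Real.norm_eq_abs, abs_of_pos (by linarith)]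
    -- component bounds
    have r1 : ‖A 0 (j+1)‖ ≤ 12 * S j / (ν * (j+1)) := by
      have h := congrArg (‖·‖) (h1 j hj)
      rw [norm_mul, d0] at h
      refine keyle hm le_rfl h (norm_nonneg _) ?_
      have e : A 2 j - r * A 3 j - B 2 j =
          (1:ℂ)*(A 2 j) + (-r)*(A 3 j) + (-1)*(B 2 j) + 0*0 + 0*0 + 0*0 := by ring
      rw [e]
      exact comb hc_one hc_negr hc_negone hc_zero hc_zero hc_zero
        (hA 2) (hA 3) (hB 2) hz0 hz0 hz0
    have r2 : ‖A 1 (j+1)‖ ≤ 12 * S j / (ν * (j+1)) := by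
      have h := congrArg (‖·‖) (h2 j hj)
      rw [norm_mul, d1] at h
      refine keyle hm (by linarith) h (norm_nonneg _) ?_
      have e : r * A 1 j - A 2 j - B 0 j - B 4 j =
          r*(A 1 j) + (-1)*(A 2 j) + (-1)*(B 0 j) + (-1)*(B 4 j) + 0*0 + 0*0 := by ring
      rw [e]
      exact comb hc_r hc_negone hc_negone hc_negone hc_zero hc_zero
        (hA 1) (hA 2) (hB 0) (hB 4) hz0 hz0
    have r3 : ‖A 2 (j+1)‖ ≤ 12 * S j / (ν * (j+1)) := by
      have h := congrArg (‖·‖) (h3 j hj)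
      rw [norm_mul, d1] at h
      refine keyle hm (by linarith) h (norm_nonneg _) ?_
      have e : A 0 j + A 1 j + r * A 2 j - A 3 j - B 1 j - B 5 j =
          (1:ℂ)*(A 0 j) + (1:ℂ)*(A 1 j) + r*(A 2 j) + (-1)*(A 3 j) + (-1)*(B 1 j) +
            (-1)*(B 5 j) := by ring
      rw [e]
      exact comb hc_one hc_one hc_r hc_negone hc_negone hc_negone
        (hA 0) (hA 1) (hA 2) (hA 3) (hB 1) (hB 5)
    have r4 : ‖A 3 (j+1)‖ ≤ 12 * S j / (ν * (j+1)) := by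
      have h := congrArg (‖·‖) (h4 j hj)
      rw [norm_mul, d1] at h
      refine keyle hm (by linarith) h (norm_nonneg _) ?_
      have e : -A 2 j + r * A 3 j + B 2 j =
          (-1:ℂ)*(A 2 j) + r*(A 3 j) + (1:ℂ)*(B 2 j) + 0*0 + 0*0 + 0*0 := by ring
      rw [e]
      exact comb hc_negone hc_r hc_one hc_zero hc_zero hc_zero
        (hA 2) (hA 3) (hB 2) hz0 hz0 hz0
    have r5 : ‖B 0 (j+1)‖ ≤ 12 * S j / (ν * (j+1)) := by
      have h := congrArg (‖·‖) (h5 j hj)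
      rw [norm_mul, d1] at h
      refine keyle hm (by linarith) h (norm_nonneg _) ?_
      have e : -r * B 0 j - B 1 j - B 3 j - r * B 4 j - A 0 j + (r ^ 2 - 1) * A 1 j =
          (-r)*(B 0 j) + (-1)*(B 1 j) + (-1)*(B 3 j) + (-r)*(B 4 j) + (-1)*(A 0 j) +
            (r^2-1)*(A 1 j) := by ring
      rw [e]
      exact comb hc_negr hc_negone hc_negone hc_negr hc_negone hc_r2
        (hB 0) (hB 1) (hB 3) (hB 4) (hA 0) (hA 1)
    have r6 : ‖B 1 (j+1)‖ ≤ 12 * S j / (ν * (j+1)) := by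
      have h := congrArg (‖·‖) (h6 j hj)
      rw [norm_mul, d1] at h
      refine keyle hm (by linarith) h (norm_nonneg _) ?_
      have e : B 0 j - r * B 1 j + B 2 j - r * B 5 j + r * A 0 j + (r ^ 2 - 1) * A 2 j =
          (1:ℂ)*(B 0 j) + (-r)*(B 1 j) + (1:ℂ)*(B 2 j) + (-r)*(B 5 j) + r*(A 0 j) +
            (r^2-1)*(A 2 j) := by ring
      rw [e]
      exact comb hc_one hc_negr hc_one hc_negr hc_r hc_r2
        (hB 0) (hB 1) (hB 2) (hB 5) (hA 0) (hA 2)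
    have r7 : ‖B 2 (j+1)‖ ≤ 12 * S j / (ν * (j+1)) := by
      have h := congrArg (‖·‖) (h7 j hj)
      rw [norm_mul, d1] at h
      refine keyle hm (by linarith) h (norm_nonneg _) ?_
      have e : B 1 j - r * B 2 j + B 5 j + (1 - r ^ 2) * A 3 j =
          (1:ℂ)*(B 1 j) + (-r)*(B 2 j) + (1:ℂ)*(B 5 j) + (1-r^2)*(A 3 j) + 0*0 + 0*0 := by
        ring
      rw [e]
      exact comb hc_one hc_negr hc_one hc_r2' hc_zero hc_zero
        (hB 1) (hB 2) (hB 5) (hA 3) hz0 hz0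
    have r8 : ‖B 3 (j+1)‖ ≤ 12 * S j / (ν * (j+1)) := by
      have h := congrArg (‖·‖) (h8 j hj)
      rw [norm_mul, d2] at h
      refine keyle hm (by linarith) h (norm_nonneg _) ?_
      have e : -B 0 j + B 4 j + r * A 1 j + A 2 j =
          (-1:ℂ)*(B 0 j) + (1:ℂ)*(B 4 j) + r*(A 1 j) + (1:ℂ)*(A 2 j) + 0*0 + 0*0 := by ring
      rw [e]
      exact comb hc_negone hc_one hc_r hc_one hc_zero hc_zero
        (hB 0) (hB 4) (hA 1) (hA 2) hz0 hz0
    have r9 : ‖B 4 (j+1)‖ ≤ 12 * S j / (ν * (j+1)) := by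
      have h := congrArg (‖·‖) (h9 j hj)
      rw [norm_mul, d2] at h
      refine keyle hm (by linarith) h (norm_nonneg _) ?_
      have e : B 3 j - B 5 j - A 3 j =
          (1:ℂ)*(B 3 j) + (-1)*(B 5 j) + (-1)*(A 3 j) + 0*0 + 0*0 + 0*0 := by ring
      rw [e]
      exact comb hc_one hc_negone hc_negone hc_zero hc_zero hc_zero
        (hB 3) (hB 5) (hA 3) hz0 hz0 hz0
    have r10 : ‖B 5 (j+1)‖ ≤ 12 * S j / (ν * (j+1)) := by
      have h := congrArg (‖·‖) (h10 j hj)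
      rw [norm_mul, d2] at h
      refine keyle hm (by linarith) h (norm_nonneg _) ?_
      have e : B 2 j + B 4 j + r * A 3 j =
          (1:ℂ)*(B 2 j) + (1:ℂ)*(B 4 j) + r*(A 3 j) + 0*0 + 0*0 + 0*0 := by ring
      rw [e]
      exact comb hc_one hc_one hc_r hc_zero hc_zero hc_zero
        (hB 2) (hB 4) (hA 3) hz0 hz0 hz0
    have expand : S (j+1) =
        ‖A 0 (j+1)‖ + ‖A 1 (j+1)‖ + ‖A 2 (j+1)‖ +
        ‖A 3 (j+1)‖ + (‖B 0 (j+1)‖ + ‖B 1 (j+1)‖ +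
        ‖B 2 (j+1)‖ + ‖B 3 (j+1)‖ + ‖B 4 (j+1)‖ +
        ‖B 5 (j+1)‖) := by
      simp only [hSdef, Saux, Fin.sum_univ_four, Fin.sum_univ_six]
    rw [expand]
    have : (120 : ℝ) * S j / (ν * (j+1)) = 10 * (12 * S j / (ν * (j+1))) := by
      field_simp; ring
    rw [this]
    linarith
  -- choose C
    -- end hstep
  set C : ℝ := max 120 (ν * (S 1 + 1)) with hCdef
  have hC120 : (120:ℝ) ≤ C := le_max_left _ _
  have hC0 : 0 < C := lt_of_lt_of_le (by norm_num) hC120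
  have hmain : ∀ j : ℕ, 1 ≤ j → S j ≤ (C / ν) ^ j / (j.factorial : ℝ) := by
    intro j hj
    induction j, hj using Nat.le_induction with
    | base =>
      have h1 : ν * (S 1 + 1) ≤ C := le_max_right _ _
      have : S 1 ≤ C / ν := by
        rw [le_div_iff₀ hν0]
        nlinarith
      simpa using this
    | succ j hj ih =>
      have hstepj := hstep j hj
      have hP : 0 ≤ (C / ν) ^ j / (j.factorial : ℝ) := by positivity
      have hSj0 := Saux_nonneg A B j
      have hm : (0:ℝ) < ν * (j+1) := by positivity
      have heq : (C / ν) ^ (j+1) / ((j+1).factorial : ℝ) =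
          C * ((C / ν) ^ j / (j.factorial : ℝ)) / (ν * (j+1)) := by
        rw [pow_succ, Nat.factorial_succ]
        have hf : ((j.factorial : ℝ)) ≠ 0 := by positivity
        push_cast
        field_simp
      rw [heq]
      have h120 : 120 * S j ≤ C * ((C / ν) ^ j / (j.factorial : ℝ)) := by
        nlinarith [ih, hP, hSj0, hC120]
      calc S (j+1) ≤ 120 * S j / (ν * (j+1)) := hstepj
        _ ≤ C * ((C / ν) ^ j / (j.factorial : ℝ)) / (ν * (j+1)) :=
            div_le_div_of_nonneg_right h120 hm.le
  have hCν0 : 0 ≤ C / ν := le_of_lt (div_pos hC0 hν0)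
  refine ⟨C, hC0, fun j hj => hmain j hj, ?_, ?_⟩
  · intro p ζ
    refine Summable.of_norm_bounded_eventually_nat
      (g := fun j => (C * ‖ζ‖ / ν) ^ j / (j.factorial : ℝ))
      (Real.summable_pow_div_factorial _) ?_
    filter_upwards [Filter.eventually_ge_atTop 1] with j hj
    have h1 : ‖A p j * ζ ^ j‖ = ‖A p j‖ * ‖ζ‖ ^ j := by
      rw [norm_mul, norm_pow]
    rw [h1]
    have h2 : ‖A p j‖ ≤ (C / ν) ^ j / (j.factorial : ℝ) :=
      le_trans (le_SA A B p j) (hmain j hj)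
    have h3 : (C / ν) ^ j / (j.factorial : ℝ) * ‖ζ‖ ^ j =
        (C * ‖ζ‖ / ν) ^ j / (j.factorial : ℝ) := by
      rw [div_mul_eq_mul_div, ← mul_pow]
      ring_nf
    calc ‖A p j‖ * ‖ζ‖ ^ j
        ≤ (C / ν) ^ j / (j.factorial : ℝ) * ‖ζ‖ ^ j := by
          apply mul_le_mul_of_nonneg_right h2 (by positivity)
      _ = (C * ‖ζ‖ / ν) ^ j / (j.factorial : ℝ) := h3
  · intro q ζ
    refine Summable.of_norm_bounded_eventually_nat
      (g := fun j => (C * ‖ζ‖ / ν) ^ j / (j.factorial : ℝ))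
      (Real.summable_pow_div_factorial _) ?_
    filter_upwards [Filter.eventually_ge_atTop 1] with j hj
    have h1 : ‖B q j * ζ ^ j‖ = ‖B q j‖ * ‖ζ‖ ^ j := by
      rw [norm_mul, norm_pow]
    rw [h1]
    have h2 : ‖B q j‖ ≤ (C / ν) ^ j / (j.factorial : ℝ) :=
      le_trans (le_SB A B q j) (hmain j hj)
    have h3 : (C / ν) ^ j / (j.factorial : ℝ) * ‖ζ‖ ^ j =
        (C * ‖ζ‖ / ν) ^ j / (j.factorial : ℝ) := by
      rw [div_mul_eq_mul_div, ← mul_pow]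
      ring_nf
    calc ‖B q j‖ * ‖ζ‖ ^ j
        ≤ (C / ν) ^ j / (j.factorial : ℝ) * ‖ζ‖ ^ j := by
          apply mul_le_mul_of_nonneg_right h2 (by positivity)
      _ = (C * ‖ζ‖ / ν) ^ j / (j.factorial : ℝ) := h3
end

section
/- Let λ ∈ ℂ with Re λ > 0, let ξ₀ ∈ (0,1), ν > 1, ξ the solution of ξ' = ξ^(ν+1)(1−ξ) with ξ(y₀) = ξ₀, and let f be continuous on [y₀,∞) with |f(y)| ≤ C(1−ξ(y))^N for some integer N ≥ 1. Then the function V(y) = −e^{λy} ∫_y^∞ f(s) e^{−λs} ds is well-defined, solves V' = λV + f, and satisfies |V(y)| ≤ C(1−ξ(y))^N/(N ξ₀^(ν+1)) for y ≥ y₀. Moreover V is the unique bounded solution of V' = λV + f on [y₀,∞). -/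
open MeasureTheory Set
open Filter Topology

/-- Resolvent estimate for the Volterra construction: V(y) = −e^{λy}∫_y^∞ f e^{−λs} ds
is the unique bounded solution of V' = λV + f, with the stated decay bound. -/
theorem stmt19 (ν ξ₀ y₀ C : ℝ) (hν : 1 < ν) (hξ₀ : ξ₀ ∈ Set.Ioo (0:ℝ) 1)
    (ξ : ℝ → ℝ) (hξy₀ : ξ y₀ = ξ₀)
    (hmem : ∀ y ∈ Set.Ici y₀, ξ y ∈ Set.Ico ξ₀ 1)
    (hode : ∀ y ∈ Set.Ici y₀,
      HasDerivWithinAt ξ ((ξ y) ^ (ν + 1) * (1 - ξ y)) (Set.Ici y₀) y)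
    (lam : ℂ) (hlam : 0 < lam.re) (n : ℕ) (hn : 1 ≤ n)
    (f : ℝ → ℂ) (hf : ContinuousOn f (Set.Ici y₀))
    (hfb : ∀ y ∈ Set.Ici y₀, ‖f y‖ ≤ C * (1 - ξ y) ^ n) :
    let V : ℝ → ℂ := fun y =>
      -Complex.exp (lam * y) * ∫ s in Set.Ioi y, f s * Complex.exp (-(lam * s))
    (∀ y ∈ Set.Ici y₀,
      IntegrableOn (fun s => f s * Complex.exp (-(lam * s))) (Set.Ioi y)) ∧
    (∀ y ∈ Set.Ici y₀, HasDerivWithinAt V (lam * V y + f y) (Set.Ici y₀) y) ∧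
    (∀ y ∈ Set.Ici y₀,
      ‖V y‖ ≤ C * (1 - ξ y) ^ n / (n * ξ₀ ^ (ν + 1))) ∧
    (∀ W : ℝ → ℂ,
      (∀ y ∈ Set.Ici y₀, HasDerivWithinAt W (lam * W y + f y) (Set.Ici y₀) y) →
      (∃ M : ℝ, ∀ y ∈ Set.Ici y₀, ‖W y‖ ≤ M) →
      ∀ y ∈ Set.Ici y₀, W y = V y) := by
  intro V
  have hVdef : ∀ u : ℝ, V u
      = -Complex.exp (lam * u) * ∫ s in Set.Ioi u, f s * Complex.exp (-(lam * s)) :=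
    fun u => rfl
  obtain ⟨hξ0pos, hξ01⟩ := hξ₀
  set r := lam.re with hr
  set K : ℝ := n * ξ₀ ^ (ν + 1) with hKdef
  have hnpos : (0:ℝ) < n := by exact_mod_cast Nat.pos_of_ne_zero (by omega)
  have hKpos : 0 < K := mul_pos hnpos (Real.rpow_pos_of_pos hξ0pos _)
  set g : ℝ → ℂ := fun s => f s * Complex.exp (-(lam * s)) with hgdef
  set h : ℝ → ℝ := fun s => (1 - ξ s) ^ n with hhdef
  have hξcont : ContinuousOn ξ (Ici y₀) := fun y hy => (hode y hy).continuousWithinAt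
  have hhcont : ContinuousOn h (Ici y₀) := (continuousOn_const.sub hξcont).pow n
  have hh0 : ∀ y ∈ Ici y₀, 0 ≤ h y := fun y hy =>
    pow_nonneg (by linarith [(hmem y hy).2]) n
  have hh1 : ∀ y ∈ Ici y₀, h y ≤ 1 := fun y hy =>
    pow_le_one₀ (by linarith [(hmem y hy).2]) (by linarith [(hmem y hy).1])
  have hC : 0 ≤ C := by
    have h1 := hfb y₀ self_mem_Ici
    have h2 : 0 < (1 - ξ y₀) ^ n := pow_pos (by rw [hξy₀]; linarith) n
    nlinarith [norm_nonneg (f y₀)]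
  have hgcont : ContinuousOn g (Ici y₀) :=
    hf.mul ((Complex.continuous_exp.comp
      ((continuous_const.mul Complex.continuous_ofReal).neg)).continuousOn)
  have hgnorm : ∀ s : ℝ, ‖g s‖ = ‖f s‖ * Real.exp (-(r * s)) := by
    intro s
    rw [hgdef]
    simp only [norm_mul, Complex.norm_exp]
    congr 2
    simp [Complex.mul_re, hr]
  -- Part 1 : integrability
  have hIntg : ∀ y ∈ Ici y₀, IntegrableOn g (Ioi y) := by
    intro y hy
    have maj : IntegrableOn (fun s => C * Real.exp (-r * s)) (Ioi y) :=
      (exp_neg_integrableOn_Ioi y hlam).const_mul C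
    refine Integrable.mono' maj
      ((hgcont.mono (fun s hs => hy.trans (le_of_lt hs))).aestronglyMeasurable
        measurableSet_Ioi) ?_
    filter_upwards [ae_restrict_mem measurableSet_Ioi] with s hs
    have hs' : s ∈ Ici y₀ := mem_Ici.2 ((mem_Ici.1 hy).trans (le_of_lt (mem_Ioi.1 hs)))
    rw [hgnorm]
    have h1 : ‖f s‖ ≤ C := by
      have := hfb s hs'
      have := hh0 s hs'
      have := hh1 s hs'
      simp only [hhdef] at *
      nlinarith
    have : ‖f s‖ * Real.exp (-(r * s)) ≤ C * Real.exp (-(r * s)) :=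
      mul_le_mul_of_nonneg_right h1 (Real.exp_nonneg _)
    calc ‖f s‖ * Real.exp (-(r * s)) ≤ C * Real.exp (-(r * s)) := this
      _ = C * Real.exp (-r * s) := by ring_nf
  have hrpow : ∀ s ∈ Ici y₀, ξ₀ ^ (ν + 1) ≤ ξ s ^ (ν + 1) := fun s hs =>
    Real.rpow_le_rpow (le_of_lt hξ0pos) (hmem s hs).1 (by linarith)
  have hhderiv : ∀ s : ℝ, y₀ < s →
      HasDerivAt h (-((n : ℝ) * ξ s ^ (ν + 1) * h s)) s := by
    intro s hs
    have hd : HasDerivAt ξ (ξ s ^ (ν + 1) * (1 - ξ s)) s :=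
      (hode s (le_of_lt hs)).hasDerivAt (Ici_mem_nhds hs)
    have hd2 : HasDerivAt (fun t => 1 - ξ t) (-(ξ s ^ (ν + 1) * (1 - ξ s))) s := by
      exact hd.const_sub 1
    have hd3 := hd2.pow n
    refine hd3.congr_deriv (Eq.symm ?_)
    have hpow : (1 - ξ s) ^ (n - 1) * (1 - ξ s) = (1 - ξ s) ^ n := by
      rw [← pow_succ]
      congr 1
      omega
    simp only [hhdef]
    linear_combination ((n : ℝ) * ξ s ^ (ν + 1)) * hpow
  -- interval integral bound
  have key : ∀ a b : ℝ, y₀ ≤ a → a ≤ b → (∫ s in a..b, h s) ≤ h a / K := by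
    intro a b ha hab
    have hsub : Icc a b ⊆ Ici y₀ := fun x hx => ha.trans hx.1
    have hconth : ContinuousOn h (Icc a b) := hhcont.mono hsub
    have hcontp : ContinuousOn (fun s => -((n : ℝ) * ξ s ^ (ν + 1) * h s)) (Icc a b) := by
      apply ContinuousOn.neg
      exact (continuousOn_const.mul ((hξcont.mono hsub).rpow_const
        (fun x hx => Or.inr (by linarith)))).mul hconth
    have hcontpos : ContinuousOn (fun s => (n : ℝ) * ξ s ^ (ν + 1) * h s) (Icc a b) :=
      (continuousOn_const.mul ((hξcont.mono hsub).rpow_const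
        (fun x hx => Or.inr (by linarith)))).mul hconth
    have hintpos : IntervalIntegrable (fun s => (n : ℝ) * ξ s ^ (ν + 1) * h s) volume a b :=
      (by rw [uIcc_of_le hab]; exact hcontpos : ContinuousOn _ (uIcc a b)).intervalIntegrable
    have hintp : IntervalIntegrable (fun s => -((n : ℝ) * ξ s ^ (ν + 1) * h s)) volume a b :=
      hintpos.neg
    have hinth : IntervalIntegrable h volume a b :=
      (by rw [uIcc_of_le hab]; exact hconth : ContinuousOn _ (uIcc a b)).intervalIntegrable
    have hftc : (∫ s in a..b, -((n : ℝ) * ξ s ^ (ν + 1) * h s)) = h b - h a := by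
      apply intervalIntegral.integral_eq_sub_of_hasDeriv_right_of_le hab hconth ?_ hintp
      intro x hx
      exact (hhderiv x (lt_of_le_of_lt ha hx.1)).hasDerivWithinAt
    have hmono : (∫ s in a..b, h s) ≤ ∫ s in a..b, ((n : ℝ) * ξ s ^ (ν + 1) * h s) / K := by
      apply intervalIntegral.integral_mono_on hab hinth (hintpos.div_const K)
      intro x hx
      have hx' := hsub hx
      rw [le_div_iff₀ hKpos]
      have h1 := hrpow x hx'
      have h2 := hh0 x hx'
      have h3 : (0:ℝ) ≤ n := le_of_lt hnpos
      have h4 := mul_le_mul_of_nonneg_right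
        (mul_le_mul_of_nonneg_left h1 h3) h2
      calc h x * K = (n : ℝ) * ξ₀ ^ (ν + 1) * h x := by rw [hKdef]; ring
        _ ≤ (n : ℝ) * ξ x ^ (ν + 1) * h x := h4
    have hdiv : (∫ s in a..b, ((n : ℝ) * ξ s ^ (ν + 1) * h s) / K) = (h a - h b) / K := by
      rw [intervalIntegral.integral_div]
      have h5 : (∫ s in a..b, (n : ℝ) * ξ s ^ (ν + 1) * h s) = h a - h b := by
        have h6 := hftc
        rw [intervalIntegral.integral_neg] at h6
        linarith
      rw [h5]
    have hb0 : 0 ≤ h b := hh0 b (ha.trans hab)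
    calc (∫ s in a..b, h s) ≤ (h a - h b) / K := by rw [← hdiv]; exact hmono
      _ ≤ h a / K := by gcongr; linarith
  have hIntOnh : ∀ y ∈ Ici y₀, IntegrableOn h (Ioi y) := by
    intro y hy
    refine integrableOn_Ioi_of_intervalIntegral_norm_bounded (h y / K) y
      ?_ tendsto_id ?_
    · intro i
      rcases le_or_gt y i with hyi | hyi
      · have hIcc : ContinuousOn h (Icc y i) :=
          hhcont.mono (fun x hx => mem_Ici.2 ((mem_Ici.1 hy).trans hx.1))
        exact hIcc.integrableOn_Icc.mono_set Ioc_subset_Icc_self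
      · rw [Ioc_eq_empty (by exact not_lt.mpr (le_of_lt hyi))]
        exact integrableOn_empty
    · filter_upwards [eventually_ge_atTop y] with i hi
      simp only [id_eq]
      have heq : (∫ x in y..i, ‖h x‖) = ∫ x in y..i, h x := by
        apply intervalIntegral.integral_congr
        intro x hx
        rw [uIcc_of_le hi] at hx
        exact Real.norm_of_nonneg (hh0 x (mem_Ici.2 ((mem_Ici.1 hy).trans hx.1)))
      rw [heq]
      exact key y i hy hi
  have hIoih : ∀ y ∈ Ici y₀, (∫ s in Ioi y, h s) ≤ h y / K := by
    intro y hy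
    refine le_of_tendsto (intervalIntegral_tendsto_integral_Ioi y (hIntOnh y hy) tendsto_id) ?_
    filter_upwards [eventually_ge_atTop y] with i hi
    exact key y i hy hi
  -- the pointwise bound on V
  have hVbound : ∀ y ∈ Ici y₀, ‖V y‖ ≤ C * h y / K := by
    intro y hy
    have e1 : ‖V y‖ = Real.exp (r * y) * ‖∫ s in Ioi y, g s‖ := by
      have e0 : ‖V y‖
          = ‖Complex.exp (lam * y)‖ * ‖∫ s in Ioi y, g s‖ := by
        simp [V, hgdef, map_mul]
      rw [e0, Complex.norm_exp]
      congr 2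
      simp [Complex.mul_re, hr]
    have e2 : ‖∫ s in Ioi y, g s‖ ≤ ∫ s in Ioi y, ‖g s‖ := norm_integral_le_integral_norm g
    have e3 : (∫ s in Ioi y, ‖g s‖) ≤ ∫ s in Ioi y, (C * Real.exp (-(r * y))) * h s := by
      apply setIntegral_mono_on (hIntg y hy).norm ((hIntOnh y hy).const_mul _)
        measurableSet_Ioi
      intro s hs
      have hs' : s ∈ Ici y₀ := mem_Ici.2 ((mem_Ici.1 hy).trans (le_of_lt (mem_Ioi.1 hs)))
      rw [hgnorm]
      have hfs : ‖f s‖ ≤ C * h s := hfb s hs'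
      have hexple : Real.exp (-(r * s)) ≤ Real.exp (-(r * y)) := by
        apply Real.exp_le_exp.2
        have : y ≤ s := le_of_lt hs
        nlinarith
      calc ‖f s‖ * Real.exp (-(r * s))
          ≤ (C * h s) * Real.exp (-(r * y)) :=
            mul_le_mul hfs hexple (Real.exp_nonneg _) (mul_nonneg hC (hh0 s hs'))
        _ = (C * Real.exp (-(r * y))) * h s := by ring
    have e4 : (∫ s in Ioi y, (C * Real.exp (-(r * y))) * h s)
        = (C * Real.exp (-(r * y))) * ∫ s in Ioi y, h s := by
      rw [integral_const_mul]
    have e5 : (∫ s in Ioi y, h s) ≤ h y / K := hIoih y hy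
    have hexp0 : (0:ℝ) < Real.exp (-(r * y)) := Real.exp_pos _
    have e6 : Real.exp (r * y) * Real.exp (-(r * y)) = 1 := by
      rw [← Real.exp_add]; ring_nf; exact Real.exp_zero
    calc ‖V y‖
        ≤ Real.exp (r * y) * ((C * Real.exp (-(r * y))) * ∫ s in Ioi y, h s) := by
          rw [e1, ← e4]
          exact mul_le_mul_of_nonneg_left (e2.trans e3) (Real.exp_nonneg _)
      _ = (Real.exp (r * y) * Real.exp (-(r * y))) * (C * ∫ s in Ioi y, h s) := by ring
      _ = C * ∫ s in Ioi y, h s := by rw [e6, one_mul]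
      _ ≤ C * (h y / K) := mul_le_mul_of_nonneg_left e5 hC
      _ = C * h y / K := by ring
  -- splitting of the integral
  have hsplit : ∀ u ∈ Ici y₀,
      (∫ s in Ioi u, g s) = (∫ s in Ioi y₀, g s) - ∫ s in y₀..u, g s := by
    intro u hu
    rw [intervalIntegral.integral_of_le hu]
    have hun : Ioc y₀ u ∪ Ioi u = Ioi y₀ := Ioc_union_Ioi_eq_Ioi hu
    have hdisj : Disjoint (Ioc y₀ u) (Ioi u) := by
      apply disjoint_left.2
      intro x hx1 hx2
      exact absurd hx1.2 (not_le.2 hx2)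
    have h7 : (∫ s in Ioi y₀, g s)
        = (∫ s in Ioc y₀ u, g s) + ∫ s in Ioi u, g s := by
      rw [← hun]
      exact setIntegral_union hdisj measurableSet_Ioi
        ((hIntg y₀ self_mem_Ici).mono_set Ioc_subset_Ioi_self) (hIntg u hu)
    rw [h7]; ring
  -- Part 2 : the derivative
  have hVderiv : ∀ y ∈ Ici y₀, HasDerivWithinAt V (lam * V y + f y) (Ici y₀) y := by
    intro y hy
    have hgInt : IntervalIntegrable g volume y₀ y := by
      apply ContinuousOn.intervalIntegrable
      rw [uIcc_of_le hy]
      exact hgcont.mono (fun x hx => hx.1)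
    have hFd : HasDerivWithinAt (fun u => ∫ s in y₀..u, g s) (g y) (Ici y₀) y := by
      rcases eq_or_lt_of_le (mem_Ici.1 hy) with heq | hlt
      · subst heq
        exact intervalIntegral.integral_hasDerivWithinAt_right (t := Ioi y₀) hgInt
          ⟨Ici y₀, Filter.mem_of_superset self_mem_nhdsWithin Ioi_subset_Ici_self,
            hgcont.aestronglyMeasurable measurableSet_Ici⟩
          ((hgcont y₀ self_mem_Ici).mono Ioi_subset_Ici_self)
      · have hcont : ContinuousAt g y := (hgcont y hy).continuousAt (Ici_mem_nhds hlt)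
        have hmeas : StronglyMeasurableAtFilter g (𝓝 y) :=
          ⟨Ici y₀, Ici_mem_nhds hlt, hgcont.aestronglyMeasurable measurableSet_Ici⟩
        exact (intervalIntegral.integral_hasDerivAt_right hgInt hmeas hcont).hasDerivWithinAt
    have hexp : HasDerivAt (fun u : ℝ => Complex.exp (lam * u))
        (Complex.exp (lam * y) * lam) y := by
      have h1 : HasDerivAt (fun u : ℝ => lam * (u : ℂ)) lam y := by
        simpa using Complex.ofRealCLM.hasDerivAt.const_mul lam
      exact h1.cexp
    have hexpmul : Complex.exp (lam * y) * Complex.exp (-(lam * y)) = 1 := by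
      rw [← Complex.exp_add]; simp
    have hfg : Complex.exp (lam * y) * g y = f y := by
      rw [hgdef]
      calc Complex.exp (lam * ↑y) * (f y * Complex.exp (-(lam * ↑y)))
          = (Complex.exp (lam * ↑y) * Complex.exp (-(lam * ↑y))) * f y := by ring
        _ = f y := by rw [hexpmul, one_mul]
    have hW : HasDerivWithinAt
        (fun u : ℝ => -Complex.exp (lam * (u:ℂ)) * ((∫ s in Ioi y₀, g s) - ∫ s in y₀..u, g s))
        (lam * V y + f y) (Ici y₀) y := by
      have hprod := (hexp.hasDerivWithinAt.neg.mul
        ((hasDerivWithinAt_const (c := ∫ s in Ioi y₀, g s) (x := y) (s := Ici y₀) ..).sub hFd))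
      refine hprod.congr_deriv (Eq.symm ?_)
      have hVy : V y = -Complex.exp (lam * y) * ((∫ s in Ioi y₀, g s) - ∫ s in y₀..y, g s) := by
        rw [hVdef y, hsplit y hy]
      rw [hVy, ← hfg]
      simp only [Pi.sub_apply, Pi.neg_apply]
      ring
    exact hW.congr (fun u hu => by rw [hVdef u, hsplit u hu])
      (by rw [hVdef y, hsplit y hy])
  refine ⟨hIntg, hVderiv, ?_, ?_⟩
  · intro y hy
    simpa only [hhdef, hKdef] using hVbound y hy
  -- Part 4 : uniqueness
  intro W hW hWb y hy
  obtain ⟨M, hM⟩ := hWb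
  set D : ℝ → ℂ := fun u => W u - V u with hDdef
  have hDd : ∀ u ∈ Ici y₀, HasDerivWithinAt D (lam * D u) (Ici y₀) u := by
    intro u hu
    have hsub := (hW u hu).sub (hVderiv u hu)
    refine hsub.congr_deriv (Eq.symm ?_)
    simp only [hDdef]
    ring
  set E : ℝ → ℂ := fun u => Complex.exp (-(lam * u)) * D u with hEdef
  have hEd : ∀ u ∈ Ici y₀, HasDerivWithinAt E (0 : ℂ) (Ici y₀) u := by
    intro u hu
    have hexp : HasDerivAt (fun t : ℝ => Complex.exp (-(lam * t)))
        (Complex.exp (-(lam * u)) * -lam) u := by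
      have h1 : HasDerivAt (fun t : ℝ => -(lam * (t : ℂ))) (-lam) u := by
        exact (show HasDerivAt (fun t : ℝ => lam * (t : ℂ)) lam u by
          simpa using Complex.ofRealCLM.hasDerivAt.const_mul lam).neg
      exact h1.cexp
    have hm := hexp.hasDerivWithinAt.mul (hDd u hu)
    refine hm.congr_deriv (Eq.symm ?_)
    ring
  have hEconst : ∀ u ∈ Ici y₀, E u = E y₀ := by
    intro u hu
    have hb : ∀ x ∈ Ici y₀, ‖(fun _ : ℝ => (0:ℂ)) x‖ ≤ 0 := by
      intro x hx; simp
    have := Convex.norm_image_sub_le_of_norm_hasDerivWithin_le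
      (f' := fun _ => (0:ℂ)) hEd hb (convex_Ici y₀) self_mem_Ici hu
    rw [← sub_eq_zero]
    have h0 : ‖E u - E y₀‖ ≤ 0 := by simpa using this
    exact norm_le_zero_iff.1 h0
  have hVM : ∀ u ∈ Ici y₀, ‖V u‖ ≤ C / K := by
    intro u hu
    refine (hVbound u hu).trans ?_
    rw [show C / K = C * 1 / K by ring]
    gcongr
    exact hh1 u hu
  have hEnorm : ∀ u ∈ Ici y₀, ‖E y₀‖ ≤ (M + C / K) * Real.exp (-(r * u)) := by
    intro u hu
    rw [← hEconst u hu]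
    have hnormE : ‖E u‖ = Real.exp (-(r * u)) * ‖D u‖ := by
      simp only [hEdef, norm_mul]
      congr 1
      rw [Complex.norm_exp]
      congr 1
      simp [Complex.mul_re, hr]
    rw [hnormE]
    have hDb : ‖D u‖ ≤ M + C / K := by
      simp only [hDdef]
      calc ‖W u - V u‖ ≤ ‖W u‖ + ‖V u‖ := norm_sub_le _ _
        _ ≤ M + C / K := by
            exact add_le_add (hM u hu) (hVM u hu)
    calc Real.exp (-(r * u)) * ‖D u‖ ≤ Real.exp (-(r * u)) * (M + C / K) :=
        mul_le_mul_of_nonneg_left hDb (Real.exp_nonneg _)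
      _ = (M + C / K) * Real.exp (-(r * u)) := by ring
  have htend : Filter.Tendsto (fun u : ℝ => (M + C / K) * Real.exp (-(r * u)))
      Filter.atTop (nhds 0) := by
    rw [show (0:ℝ) = (M + C / K) * 0 by ring]
    apply Filter.Tendsto.const_mul
    apply Real.tendsto_exp_atBot.comp
    have : Filter.Tendsto (fun u : ℝ => r * u) Filter.atTop Filter.atTop :=
      Filter.Tendsto.const_mul_atTop hlam Filter.tendsto_id
    rw [show (fun u : ℝ => -(r * u)) = (fun u : ℝ => -(r * u)) from rfl]
    exact tendsto_neg_atBot_iff.2 this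
  have hE0 : E y₀ = 0 := by
    have hle : ‖E y₀‖ ≤ 0 := by
      refine ge_of_tendsto htend ?_
      filter_upwards [Filter.eventually_ge_atTop y₀] with u hu
      exact hEnorm u hu
    exact norm_le_zero_iff.1 hle
  have hEy : E y = 0 := (hEconst y hy).trans hE0
  have hD0 : D y = 0 := by
    rcases mul_eq_zero.1 hEy with h' | h'
    · exact absurd h' (Complex.exp_ne_zero _)
    · exact h'
  have hfin : W y - V y = 0 := hD0
  exact sub_eq_zero.1 hfin
end
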